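/- arXiv:2305.03637 — 6 statements merged into one kernel-verified Lean document; each statement's English description precedes it below -/
import Mathlib

section
/- For every integer N ≥ 2, every exponent s ≥ 0, and every tuple of pairwise distinct points x_1, …, x_N in ℝ^d, one has ∑_{i=1}^N ⟨ ∑_{j≠i} (x_i−x_j)/|x_i−x_j|^{s+1} , ∑_{ℓ≠i} (x_i−x_ℓ)/|x_i−x_ℓ| ⟩ ≥ 2 ∑_{1≤i<j≤N} 1/|x_i−x_j|^s. -/
open scoped RealInnerProductSpace

open Finset in

private lemma pair_sum {N : ℕ} (f : Fin N → Fin N → ℝ) :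
    ∑ i : Fin N, ∑ j ∈ univ.filter (fun j => j ≠ i), f i j
      = ∑ i : Fin N, ∑ j ∈ univ.filter (fun j => i < j), (f i j + f j i) := by
  have h1 : ∀ i : Fin N, (univ.filter (fun j => j ≠ i) : Finset (Fin N))
      = univ.filter (fun j => i < j) ∪ univ.filter (fun j => j < i) := by
    intro i; ext j
    simp only [mem_filter, mem_univ, true_and, mem_union]
    exact ne_iff_lt_or_gt.trans or_comm
  have hd : ∀ i : Fin N, Disjoint (univ.filter (fun j => i < j))
      (univ.filter (fun j => j < i) : Finset (Fin N)) := by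
    intro i
    rw [Finset.disjoint_left]
    intro j hj hj2
    simp only [mem_filter, mem_univ, true_and] at hj hj2
    exact absurd hj2 (not_lt.mpr hj.le)
  have hswap : ∑ i : Fin N, ∑ j ∈ univ.filter (fun j => j < i), f i j
      = ∑ i : Fin N, ∑ j ∈ univ.filter (fun j => i < j), f j i := by
    rw [Finset.sum_sigma', Finset.sum_sigma']
    apply Finset.sum_nbij' (fun p => ⟨p.2, p.1⟩) (fun p => ⟨p.2, p.1⟩) <;> simp
  calc ∑ i : Fin N, ∑ j ∈ univ.filter (fun j => j ≠ i), f i j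
      = ∑ i : Fin N, (∑ j ∈ univ.filter (fun j => i < j), f i j
          + ∑ j ∈ univ.filter (fun j => j < i), f i j) := by
        refine Finset.sum_congr rfl fun i _ => ?_
        rw [h1 i, Finset.sum_union (hd i)]
    _ = ∑ i : Fin N, ∑ j ∈ univ.filter (fun j => i < j), f i j
          + ∑ i : Fin N, ∑ j ∈ univ.filter (fun j => j < i), f i j := by
        rw [Finset.sum_add_distrib]
    _ = ∑ i : Fin N, ∑ j ∈ univ.filter (fun j => i < j), (f i j + f j i) := by
        rw [hswap, ← Finset.sum_add_distrib]
        exact Finset.sum_congr rfl fun i _ => (Finset.sum_add_distrib).symm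

private lemma key {d : ℕ} (u v : EuclideanSpace ℝ (Fin d)) (hu : u ≠ 0) (hv : v ≠ 0) :
    0 ≤ ‖u‖⁻¹ * ⟪u - v, u⟫ + ‖v‖⁻¹ * ⟪v - u, v⟫ := by
  have hu' : (0:ℝ) < ‖u‖ := norm_pos_iff.mpr hu
  have hv' : (0:ℝ) < ‖v‖ := norm_pos_iff.mpr hv
  have hC : ⟪u, v⟫ ≤ ‖u‖ * ‖v‖ := real_inner_le_norm u v
  have hC' : ⟪v, u⟫ ≤ ‖u‖ * ‖v‖ := by rw [real_inner_comm]; exact hC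
  rw [inner_sub_left, inner_sub_left, real_inner_self_eq_norm_sq,
    real_inner_self_eq_norm_sq]
  have h1 : ‖u‖⁻¹ * (‖u‖ ^ 2 - ⟪v, u⟫) = ‖u‖ - ⟪v, u⟫ / ‖u‖ := by
    field_simp
  have h2 : ‖v‖⁻¹ * (‖v‖ ^ 2 - ⟪u, v⟫) = ‖v‖ - ⟪u, v⟫ / ‖v‖ := by
    field_simp
  rw [h1, h2]
  have d1 : ⟪v, u⟫ / ‖u‖ ≤ ‖v‖ := by
    rw [div_le_iff₀ hu']; nlinarith
  have d2 : ⟪u, v⟫ / ‖v‖ ≤ ‖u‖ := by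
    rw [div_le_iff₀ hv']; nlinarith
  linarith

open Finset in
theorem stmt_0 (N d : ℕ) (hN : 2 ≤ N) (s : ℝ) (hs : 0 ≤ s)
    (x : Fin N → EuclideanSpace ℝ (Fin d))
    (hx : ∀ i j : Fin N, i ≠ j → x i ≠ x j) :
    ∑ i : Fin N,
      ⟪∑ j ∈ Finset.univ.filter (fun j => j ≠ i), (‖x i - x j‖ ^ (s + 1))⁻¹ • (x i - x j),
        ∑ l ∈ Finset.univ.filter (fun l => l ≠ i), (‖x i - x l‖)⁻¹ • (x i - x l)⟫
      ≥ 2 * ∑ i : Fin N, ∑ j ∈ Finset.univ.filter (fun j => i < j),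
          (‖x i - x j‖ ^ s)⁻¹ := by
  set F : Fin N → Fin N → Fin N → ℝ := fun i j l =>
    (‖x i - x j‖ ^ (s + 1))⁻¹ * (‖x i - x l‖⁻¹ * ⟪x i - x j, x i - x l⟫) with hF
  have expand : ∑ i : Fin N,
      ⟪∑ j ∈ Finset.univ.filter (fun j => j ≠ i), (‖x i - x j‖ ^ (s + 1))⁻¹ • (x i - x j),
        ∑ l ∈ Finset.univ.filter (fun l => l ≠ i), (‖x i - x l‖)⁻¹ • (x i - x l)⟫
      = ∑ i : Fin N, ∑ j ∈ Finset.univ.filter (fun j => j ≠ i),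
          ∑ l ∈ Finset.univ.filter (fun l => l ≠ i), F i j l := by
    simp only [sum_inner, inner_sum, real_inner_smul_left, real_inner_smul_right, hF]
    refine Finset.sum_congr rfl fun i _ => ?_
    rw [Finset.sum_comm]
    exact Finset.sum_congr rfl fun j _ => Finset.sum_congr rfl fun l _ => by ring
  rw [expand]
  -- split off diagonal l = j
  have split : ∀ i : Fin N, ∀ j ∈ Finset.univ.filter (fun j => j ≠ i),
      ∑ l ∈ Finset.univ.filter (fun l => l ≠ i), F i j l
        = F i j j + ∑ l ∈ (Finset.univ.filter (fun l => l ≠ i)).erase j, F i j l := by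
    intro i j hj
    exact (Finset.add_sum_erase _ _ (by simpa using (Finset.mem_filter.mp hj).2)).symm
  have hdiag : ∀ i j : Fin N, j ≠ i → F i j j = (‖x i - x j‖ ^ s)⁻¹ := by
    intro i j hj
    have hr : (0:ℝ) < ‖x i - x j‖ := by
      rw [norm_pos_iff, sub_ne_zero]; exact hx i j (Ne.symm hj)
    have hrs : (0:ℝ) < ‖x i - x j‖ ^ s := Real.rpow_pos_of_pos hr s
    rw [hF]
    simp only
    rw [real_inner_self_eq_norm_sq, Real.rpow_add hr, Real.rpow_one]
    field_simp
  calc ∑ i : Fin N, ∑ j ∈ Finset.univ.filter (fun j => j ≠ i),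
          ∑ l ∈ Finset.univ.filter (fun l => l ≠ i), F i j l
      = ∑ i : Fin N, ∑ j ∈ Finset.univ.filter (fun j => j ≠ i),
          ((‖x i - x j‖ ^ s)⁻¹
            + ∑ l ∈ (Finset.univ.filter (fun l => l ≠ i)).erase j, F i j l) := by
        refine Finset.sum_congr rfl fun i _ => Finset.sum_congr rfl fun j hj => ?_
        rw [split i j hj, hdiag i j (by simpa using (Finset.mem_filter.mp hj).2)]
    _ = ∑ i : Fin N, ∑ j ∈ Finset.univ.filter (fun j => j ≠ i), (‖x i - x j‖ ^ s)⁻¹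
          + ∑ i : Fin N, ∑ j ∈ Finset.univ.filter (fun j => j ≠ i),
              ∑ l ∈ (Finset.univ.filter (fun l => l ≠ i)).erase j, F i j l := by
        rw [← Finset.sum_add_distrib]
        exact Finset.sum_congr rfl fun i _ => Finset.sum_add_distrib
    _ ≥ 2 * ∑ i : Fin N, ∑ j ∈ Finset.univ.filter (fun j => i < j), (‖x i - x j‖ ^ s)⁻¹ := by
        have hd : ∑ i : Fin N, ∑ j ∈ Finset.univ.filter (fun j => j ≠ i), (‖x i - x j‖ ^ s)⁻¹
            = 2 * ∑ i : Fin N, ∑ j ∈ Finset.univ.filter (fun j => i < j), (‖x i - x j‖ ^ s)⁻¹ := by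
          rw [pair_sum (fun i j => (‖x i - x j‖ ^ s)⁻¹), Finset.mul_sum]
          refine Finset.sum_congr rfl fun i _ => ?_
          rw [Finset.mul_sum]
          refine Finset.sum_congr rfl fun j _ => ?_
          rw [norm_sub_rev (x j)]
          ring
        rw [hd]
        have hcross : 0 ≤ ∑ i : Fin N, ∑ j ∈ Finset.univ.filter (fun j => j ≠ i),
            ∑ l ∈ (Finset.univ.filter (fun l => l ≠ i)).erase j, F i j l := by
          rw [pair_sum (fun i j => ∑ l ∈ (Finset.univ.filter (fun l => l ≠ i)).erase j, F i j l)]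
          refine Finset.sum_nonneg fun i _ => Finset.sum_nonneg fun j hj => ?_
          have hij : i ≠ j := ne_of_lt (by simpa using (Finset.mem_filter.mp hj).2)
          have hset : ∀ a b : Fin N, (Finset.univ.filter (fun l => l ≠ a)).erase b
              = Finset.univ.filter (fun l => l ≠ a ∧ l ≠ b) := by
            intro a b; ext l
            simp [Finset.mem_erase, and_comm]
          rw [hset i j, hset j i]
          have hset2 : (Finset.univ.filter (fun l => l ≠ j ∧ l ≠ i) : Finset (Fin N))
              = Finset.univ.filter (fun l => l ≠ i ∧ l ≠ j) := by
            ext l; simp [and_comm]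
          rw [hset2, ← Finset.sum_add_distrib]
          refine Finset.sum_nonneg fun l hl => ?_
          obtain ⟨hli, hlj⟩ := by simpa using hl
          set u := x i - x l with hu
          set v := x j - x l with hv
          have hune : u ≠ 0 := sub_ne_zero.mpr (hx i l (Ne.symm hli))
          have hvne : v ≠ 0 := sub_ne_zero.mpr (hx j l (Ne.symm hlj))
          have huv : x i - x j = u - v := by rw [hu, hv]; abel
          have hvu : x j - x i = v - u := by rw [hu, hv]; abel
          have hnorm2 : ‖v - u‖ = ‖u - v‖ := norm_sub_rev _ _
          rw [hF]
          simp only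
          rw [huv, hvu, ← hu, ← hv, hnorm2]
          have : (‖u - v‖ ^ (s + 1))⁻¹ * (‖u‖⁻¹ * ⟪u - v, u⟫)
              + (‖u - v‖ ^ (s + 1))⁻¹ * (‖v‖⁻¹ * ⟪v - u, v⟫)
              = (‖u - v‖ ^ (s + 1))⁻¹ * (‖u‖⁻¹ * ⟪u - v, u⟫ + ‖v‖⁻¹ * ⟪v - u, v⟫) := by ring
          rw [this]
          exact mul_nonneg (by positivity) (key u v hune hvne)
        linarith
end

section
/- For every integer N ≥ 2, every exponent s ≥ 0, and pairwise distinct points x_1,…,x_N ∈ ℝ^d, one has ∑_{i=1}^N | ∑_{j≠i} (x_i−x_j)/|x_i−x_j|^{s+1} |^2 ≥ (4/(N(N−1)^2)) ( ∑_{1≤i<j≤N} 1/|x_i−x_j|^s )^2, and consequently ∑_{i=1}^N ⟨ ∑_{j≠i} (x_i−x_j)/|x_i−x_j|^{s+1}, ∑_{ℓ≠i} (x_i−x_ℓ)/|x_i−x_ℓ|^{s+1} ⟩ ≥ (4/(N(N−1)^2)) ∑_{1≤i<j≤N} 1/|x_i−x_j|^{2s}. -/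
open scoped RealInnerProductSpace
open Finset

/-- Pure real inequality: the symmetrized triangle sum is nonnegative. -/
lemma tri_real (a b c α β γ : ℝ) (ha : 0 < a) (hb : 0 < b) (hc : 0 < c)
    (hα : 0 ≤ α) (hβ : 0 ≤ β) (hγ : 0 ≤ γ)
    (t1 : a ≤ b + c) (t2 : b ≤ a + c) (t3 : c ≤ a + b) :
    0 ≤ β * (c⁻¹ * ((b ^ 2 + c ^ 2 - a ^ 2) / 2))
      + α * (c⁻¹ * ((a ^ 2 + c ^ 2 - b ^ 2) / 2))
      + γ * (b⁻¹ * ((c ^ 2 + b ^ 2 - a ^ 2) / 2))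
      + α * (b⁻¹ * ((a ^ 2 + b ^ 2 - c ^ 2) / 2))
      + γ * (a⁻¹ * ((c ^ 2 + a ^ 2 - b ^ 2) / 2))
      + β * (a⁻¹ * ((b ^ 2 + a ^ 2 - c ^ 2) / 2)) := by
  have key : β * (c⁻¹ * ((b ^ 2 + c ^ 2 - a ^ 2) / 2))
      + α * (c⁻¹ * ((a ^ 2 + c ^ 2 - b ^ 2) / 2))
      + γ * (b⁻¹ * ((c ^ 2 + b ^ 2 - a ^ 2) / 2))
      + α * (b⁻¹ * ((a ^ 2 + b ^ 2 - c ^ 2) / 2))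
      + γ * (a⁻¹ * ((c ^ 2 + a ^ 2 - b ^ 2) / 2))
      + β * (a⁻¹ * ((b ^ 2 + a ^ 2 - c ^ 2) / 2))
      = (α * a * ((b + c) * (((a + c) - b) * ((a + b) - c)))
        + β * b * ((a + c) * (((b + c) - a) * ((a + b) - c)))
        + γ * c * ((a + b) * (((b + c) - a) * ((a + c) - b)))) / (2 * a * b * c) := by
    field_simp
    ring
  rw [key]
  apply div_nonneg _ (by positivity)
  have h1 : 0 ≤ (a + c) - b := by linarith
  have h2 : 0 ≤ (a + b) - c := by linarith
  have h3 : 0 ≤ (b + c) - a := by linarith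
  have hbc : 0 ≤ b + c := by linarith
  have hac : 0 ≤ a + c := by linarith
  have hab : 0 ≤ a + b := by linarith
  have k1 : 0 ≤ α * a * ((b + c) * (((a + c) - b) * ((a + b) - c))) :=
    mul_nonneg (mul_nonneg hα ha.le) (mul_nonneg hbc (mul_nonneg h1 h2))
  have k2 : 0 ≤ β * b * ((a + c) * (((b + c) - a) * ((a + b) - c))) :=
    mul_nonneg (mul_nonneg hβ hb.le) (mul_nonneg hac (mul_nonneg h3 h2))
  have k3 : 0 ≤ γ * c * ((a + b) * (((b + c) - a) * ((a + c) - b))) :=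
    mul_nonneg (mul_nonneg hγ hc.le) (mul_nonneg hab (mul_nonneg h3 h1))
  linarith

/-- Geometric triangle lemma: the six symmetrized terms are nonnegative. -/
lemma tri_geom {E : Type*} [NormedAddCommGroup E] [InnerProductSpace ℝ E]
    (s : ℝ) (A B C : E) (hAB : A ≠ B) (hAC : A ≠ C) (hBC : B ≠ C) :
    0 ≤ (‖A - C‖ ^ (s + 1))⁻¹ * (‖A - B‖⁻¹ * ⟪A - C, A - B⟫)
      + (‖B - C‖ ^ (s + 1))⁻¹ * (‖B - A‖⁻¹ * ⟪B - C, B - A⟫)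
      + (‖A - B‖ ^ (s + 1))⁻¹ * (‖A - C‖⁻¹ * ⟪A - B, A - C⟫)
      + (‖C - B‖ ^ (s + 1))⁻¹ * (‖C - A‖⁻¹ * ⟪C - B, C - A⟫)
      + (‖B - A‖ ^ (s + 1))⁻¹ * (‖B - C‖⁻¹ * ⟪B - A, B - C⟫)
      + (‖C - A‖ ^ (s + 1))⁻¹ * (‖C - B‖⁻¹ * ⟪C - A, C - B⟫) := by
  have inner_formula : ∀ X Y : E, ⟪X, Y⟫ = (‖X‖ ^ 2 + ‖Y‖ ^ 2 - ‖X - Y‖ ^ 2) / 2 := by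
    intro X Y
    have h := norm_sub_sq_real X Y
    linarith
  have ha : 0 < ‖B - C‖ := norm_sub_pos_iff.mpr hBC
  have hb : 0 < ‖A - C‖ := norm_sub_pos_iff.mpr hAC
  have hc : 0 < ‖A - B‖ := norm_sub_pos_iff.mpr hAB
  have i1 : ⟪A - C, A - B⟫ = (‖A - C‖ ^ 2 + ‖A - B‖ ^ 2 - ‖B - C‖ ^ 2) / 2 := by
    rw [inner_formula, show (A - C) - (A - B) = B - C by abel]
  have i2 : ⟪B - C, B - A⟫ = (‖B - C‖ ^ 2 + ‖A - B‖ ^ 2 - ‖A - C‖ ^ 2) / 2 := by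
    rw [inner_formula, show (B - C) - (B - A) = A - C by abel, norm_sub_rev B A]
  have i3 : ⟪A - B, A - C⟫ = (‖A - B‖ ^ 2 + ‖A - C‖ ^ 2 - ‖B - C‖ ^ 2) / 2 := by
    rw [inner_formula, show (A - B) - (A - C) = C - B by abel, norm_sub_rev C B]
  have i4 : ⟪C - B, C - A⟫ = (‖B - C‖ ^ 2 + ‖A - C‖ ^ 2 - ‖A - B‖ ^ 2) / 2 := by
    rw [inner_formula, show (C - B) - (C - A) = A - B by abel, norm_sub_rev C B,
      norm_sub_rev C A]
  have i5 : ⟪B - A, B - C⟫ = (‖A - B‖ ^ 2 + ‖B - C‖ ^ 2 - ‖A - C‖ ^ 2) / 2 := by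
    rw [inner_formula, show (B - A) - (B - C) = C - A by abel, norm_sub_rev B A,
      norm_sub_rev C A]
  have i6 : ⟪C - A, C - B⟫ = (‖A - C‖ ^ 2 + ‖B - C‖ ^ 2 - ‖A - B‖ ^ 2) / 2 := by
    rw [inner_formula, show (C - A) - (C - B) = B - A by abel, norm_sub_rev C A,
      norm_sub_rev C B, norm_sub_rev B A]
  rw [i1, i2, i3, i4, i5, i6, norm_sub_rev B A, norm_sub_rev C A, norm_sub_rev C B]
  have t1 : ‖B - C‖ ≤ ‖A - C‖ + ‖A - B‖ := by
    rw [show B - C = (A - C) - (A - B) by abel]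
    exact norm_sub_le _ _
  have t2 : ‖A - C‖ ≤ ‖B - C‖ + ‖A - B‖ := by
    have h : ‖A - C‖ ≤ ‖B - C‖ + ‖B - A‖ := by
      rw [show A - C = (B - C) - (B - A) by abel]
      exact norm_sub_le _ _
    rwa [norm_sub_rev B A] at h
  have t3 : ‖A - B‖ ≤ ‖B - C‖ + ‖A - C‖ := by
    have h : ‖A - B‖ ≤ ‖A - C‖ + ‖B - C‖ := by
      rw [show A - B = (A - C) - (B - C) by abel]
      exact norm_sub_le _ _
    linarith
  have hα : 0 ≤ (‖B - C‖ ^ (s + 1))⁻¹ :=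
    inv_nonneg.mpr (Real.rpow_nonneg (norm_nonneg _) _)
  have hβ : 0 ≤ (‖A - C‖ ^ (s + 1))⁻¹ :=
    inv_nonneg.mpr (Real.rpow_nonneg (norm_nonneg _) _)
  have hγ : 0 ≤ (‖A - B‖ ^ (s + 1))⁻¹ :=
    inv_nonneg.mpr (Real.rpow_nonneg (norm_nonneg _) _)
  have := tri_real ‖B - C‖ ‖A - C‖ ‖A - B‖ ((‖B - C‖ ^ (s + 1))⁻¹)
    ((‖A - C‖ ^ (s + 1))⁻¹) ((‖A - B‖ ^ (s + 1))⁻¹) ha hb hc hα hβ hγ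
    (by linarith) (by linarith) (by linarith)
  linarith

theorem stmt_1 (N d : ℕ) (hN : 2 ≤ N) (s : ℝ) (hs : 0 ≤ s)
    (x : Fin N → EuclideanSpace ℝ (Fin d))
    (hx : ∀ i j : Fin N, i ≠ j → x i ≠ x j) :
    (∑ i : Fin N,
        ‖∑ j ∈ Finset.univ.filter (fun j => j ≠ i),
            (‖x i - x j‖ ^ (s + 1))⁻¹ • (x i - x j)‖ ^ 2
      ≥ (4 / ((N : ℝ) * ((N : ℝ) - 1) ^ 2)) *
          (∑ i : Fin N, ∑ j ∈ Finset.univ.filter (fun j => i < j),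
              (‖x i - x j‖ ^ s)⁻¹) ^ 2) ∧
    (∑ i : Fin N,
        ⟪∑ j ∈ Finset.univ.filter (fun j => j ≠ i), (‖x i - x j‖ ^ (s + 1))⁻¹ • (x i - x j),
          ∑ l ∈ Finset.univ.filter (fun l => l ≠ i), (‖x i - x l‖ ^ (s + 1))⁻¹ • (x i - x l)⟫
      ≥ (4 / ((N : ℝ) * ((N : ℝ) - 1) ^ 2)) *
          ∑ i : Fin N, ∑ j ∈ Finset.univ.filter (fun j => i < j),
            (‖x i - x j‖ ^ (2 * s))⁻¹) := by
  classical
  have hN2 : (2 : ℝ) ≤ (N : ℝ) := by exact_mod_cast hN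
  have hK : (0 : ℝ) < (N : ℝ) * ((N : ℝ) - 1) ^ 2 := by nlinarith
  have hr : ∀ i j : Fin N, j ≠ i → (0 : ℝ) < ‖x i - x j‖ := fun i j h =>
    norm_sub_pos_iff.mpr (hx i j (Ne.symm h))
  set F : Fin N → EuclideanSpace ℝ (Fin d) :=
    fun i => ∑ j ∈ Finset.univ.filter (fun j => j ≠ i),
      (‖x i - x j‖ ^ (s + 1))⁻¹ • (x i - x j) with hFdef
  set v : Fin N → EuclideanSpace ℝ (Fin d) :=
    fun i => ∑ j ∈ Finset.univ.filter (fun j => j ≠ i),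
      (‖x i - x j‖)⁻¹ • (x i - x j) with hvdef
  set S : ℝ := ∑ i : Fin N, ∑ j ∈ Finset.univ.filter (fun j => i < j),
    (‖x i - x j‖ ^ s)⁻¹ with hSdef
  have hS0 : 0 ≤ S := by
    rw [hSdef]
    apply Finset.sum_nonneg; intro i _
    apply Finset.sum_nonneg; intro j _
    exact inv_nonneg.mpr (Real.rpow_nonneg (norm_nonneg _) _)
  set h3 : Fin N → Fin N → Fin N → ℝ := fun i j k =>
    (‖x i - x k‖ ^ (s + 1))⁻¹ * ((‖x i - x j‖)⁻¹ * ⟪x i - x k, x i - x j⟫) with h3def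
  -- diagonal terms
  have hdiag : ∀ i j : Fin N, j ≠ i → h3 i j j = (‖x i - x j‖ ^ s)⁻¹ := by
    intro i j hij
    have hp := hr i j hij
    have hpne : ‖x i - x j‖ ≠ 0 := ne_of_gt hp
    have hsne : ‖x i - x j‖ ^ s ≠ 0 := ne_of_gt (Real.rpow_pos_of_pos hp s)
    simp only [h3def]
    rw [real_inner_self_eq_norm_sq, Real.rpow_add hp, Real.rpow_one]
    field_simp
  -- expansion of inner products
  have hinner : ∀ i : Fin N, ⟪F i, v i⟫
      = (∑ j ∈ Finset.univ.filter (fun j => j ≠ i), (‖x i - x j‖ ^ s)⁻¹)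
        + ∑ j ∈ Finset.univ.filter (fun j => j ≠ i),
            ∑ k ∈ (Finset.univ.filter (fun k => k ≠ i)).erase j, h3 i j k := by
    intro i
    have e1 : ⟪F i, v i⟫ = ∑ j ∈ Finset.univ.filter (fun j => j ≠ i),
        ∑ k ∈ Finset.univ.filter (fun k => k ≠ i), h3 i j k := by
      simp only [hFdef, hvdef]
      rw [sum_inner]
      refine Eq.trans ?_ Finset.sum_comm
      apply Finset.sum_congr rfl; intro k _
      rw [real_inner_smul_left, inner_sum, Finset.mul_sum]
      apply Finset.sum_congr rfl; intro j _
      rw [real_inner_smul_right]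
    rw [e1, ← Finset.sum_add_distrib]
    apply Finset.sum_congr rfl
    intro j hj
    rw [← Finset.add_sum_erase _ (h3 i j) hj, hdiag i j (Finset.mem_filter.mp hj).2]
  -- symmetrization: off-diagonal singles sum to 2S
  have hsym : (∑ i : Fin N, ∑ j ∈ Finset.univ.filter (fun j => j ≠ i),
      (‖x i - x j‖ ^ s)⁻¹) = 2 * S := by
    have hS' : S = ∑ i : Fin N, ∑ j : Fin N,
        (if i < j then (‖x i - x j‖ ^ s)⁻¹ else 0) := by
      rw [hSdef]
      exact Finset.sum_congr rfl fun i _ => Finset.sum_filter _ _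
    calc ∑ i : Fin N, ∑ j ∈ Finset.univ.filter (fun j => j ≠ i), (‖x i - x j‖ ^ s)⁻¹
        = ∑ i : Fin N, ∑ j : Fin N,
            ((if i < j then (‖x i - x j‖ ^ s)⁻¹ else 0)
              + (if j < i then (‖x i - x j‖ ^ s)⁻¹ else 0)) := by
          apply Finset.sum_congr rfl; intro i _
          rw [Finset.sum_filter]
          apply Finset.sum_congr rfl; intro j _
          rcases lt_trichotomy i j with h | h | h
          · rw [if_pos h.ne', if_pos h, if_neg (asymm h), add_zero]
          · subst h; simp
          · rw [if_pos h.ne, if_neg (asymm h), if_pos h, zero_add]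
      _ = (∑ i : Fin N, ∑ j : Fin N, (if i < j then (‖x i - x j‖ ^ s)⁻¹ else 0))
            + ∑ i : Fin N, ∑ j : Fin N, (if j < i then (‖x i - x j‖ ^ s)⁻¹ else 0) := by
          rw [← Finset.sum_add_distrib]
          exact Finset.sum_congr rfl fun i _ => Finset.sum_add_distrib
      _ = S + S := by
          congr 1
          · exact hS'.symm
          · rw [Finset.sum_comm, hS']
            apply Finset.sum_congr rfl; intro a _
            apply Finset.sum_congr rfl; intro b _
            rw [norm_sub_rev]
      _ = 2 * S := by ring
  -- triple sum nonnegativity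
  set Hf : Fin N × Fin N × Fin N → ℝ := fun t =>
    if t.2.1 ≠ t.1 ∧ t.2.2 ≠ t.1 ∧ t.2.2 ≠ t.2.1 then h3 t.1 t.2.1 t.2.2 else 0 with hHf
  have hDform : (∑ i : Fin N, ∑ j ∈ Finset.univ.filter (fun j => j ≠ i),
      ∑ k ∈ (Finset.univ.filter (fun k => k ≠ i)).erase j, h3 i j k)
      = ∑ t : Fin N × Fin N × Fin N, Hf t := by
    rw [Fintype.sum_prod_type]
    apply Finset.sum_congr rfl; intro i _
    rw [Fintype.sum_prod_type, Finset.sum_filter]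
    apply Finset.sum_congr rfl; intro j _
    by_cases hj : j ≠ i
    · rw [if_pos hj]
      have hset : (Finset.univ.filter (fun k => k ≠ i)).erase j
          = Finset.univ.filter (fun k => k ≠ i ∧ k ≠ j) := by
        ext k
        simp only [Finset.mem_erase, Finset.mem_filter, Finset.mem_univ, true_and]
        tauto
      rw [hset, Finset.sum_filter]
      apply Finset.sum_congr rfl; intro k _
      by_cases hk : k ≠ i ∧ k ≠ j
      · rw [if_pos hk]
        simp only [hHf]
        rw [if_pos ⟨hj, hk.1, hk.2⟩]
      · rw [if_neg hk]
        simp only [hHf]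
        rw [if_neg (by tauto)]
    · rw [if_neg hj]
      symm
      apply Finset.sum_eq_zero; intro k _
      simp only [hHf]
      rw [if_neg (by tauto)]
  have hperm1 : ∑ t : Fin N × Fin N × Fin N, Hf (t.2.1, t.1, t.2.2)
      = ∑ t : Fin N × Fin N × Fin N, Hf t :=
    Equiv.sum_comp ⟨fun t => (t.2.1, t.1, t.2.2), fun t => (t.2.1, t.1, t.2.2),
      fun t => rfl, fun t => rfl⟩ Hf
  have hperm2 : ∑ t : Fin N × Fin N × Fin N, Hf (t.1, t.2.2, t.2.1)
      = ∑ t : Fin N × Fin N × Fin N, Hf t :=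
    Equiv.sum_comp ⟨fun t => (t.1, t.2.2, t.2.1), fun t => (t.1, t.2.2, t.2.1),
      fun t => rfl, fun t => rfl⟩ Hf
  have hperm3 : ∑ t : Fin N × Fin N × Fin N, Hf (t.2.2, t.2.1, t.1)
      = ∑ t : Fin N × Fin N × Fin N, Hf t :=
    Equiv.sum_comp ⟨fun t => (t.2.2, t.2.1, t.1), fun t => (t.2.2, t.2.1, t.1),
      fun t => rfl, fun t => rfl⟩ Hf
  have hperm4 : ∑ t : Fin N × Fin N × Fin N, Hf (t.2.1, t.2.2, t.1)
      = ∑ t : Fin N × Fin N × Fin N, Hf t :=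
    Equiv.sum_comp ⟨fun t => (t.2.1, t.2.2, t.1), fun t => (t.2.2, t.1, t.2.1),
      fun t => rfl, fun t => rfl⟩ Hf
  have hperm5 : ∑ t : Fin N × Fin N × Fin N, Hf (t.2.2, t.1, t.2.1)
      = ∑ t : Fin N × Fin N × Fin N, Hf t :=
    Equiv.sum_comp ⟨fun t => (t.2.2, t.1, t.2.1), fun t => (t.2.1, t.2.2, t.1),
      fun t => rfl, fun t => rfl⟩ Hf
  have hpt : ∀ t : Fin N × Fin N × Fin N,
      0 ≤ Hf t + Hf (t.2.1, t.1, t.2.2) + Hf (t.1, t.2.2, t.2.1) + Hf (t.2.2, t.2.1, t.1)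
        + Hf (t.2.1, t.2.2, t.1) + Hf (t.2.2, t.1, t.2.1) := by
    rintro ⟨i, j, k⟩
    by_cases h1 : j = i
    · subst h1; simp [hHf]
    by_cases h2 : k = i
    · subst h2; simp [hHf]
    by_cases h3' : k = j
    · subst h3'; simp [hHf]
    · have h1' : ¬ i = j := fun h => h1 h.symm
      have h2' : ¬ i = k := fun h => h2 h.symm
      have h3'' : ¬ j = k := fun h => h3' h.symm
      simp only [hHf, ne_eq, h1, h2, h3', h1', h2', h3'', not_false_eq_true, and_self,
        if_true, true_and, and_true, if_pos]
      simp only [h3def]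
      have := tri_geom s (x i) (x j) (x k) (hx i j h1') (hx i k h2') (hx j k h3'')
      linarith
  have hD : 0 ≤ ∑ t : Fin N × Fin N × Fin N, Hf t := by
    have h6 : ∑ t : Fin N × Fin N × Fin N,
        (Hf t + Hf (t.2.1, t.1, t.2.2) + Hf (t.1, t.2.2, t.2.1) + Hf (t.2.2, t.2.1, t.1)
          + Hf (t.2.1, t.2.2, t.1) + Hf (t.2.2, t.1, t.2.1))
        = 6 * ∑ t : Fin N × Fin N × Fin N, Hf t := by
      simp only [Finset.sum_add_distrib]
      rw [hperm1, hperm2, hperm3, hperm4, hperm5]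
      ring
    have hnn : 0 ≤ ∑ t : Fin N × Fin N × Fin N,
        (Hf t + Hf (t.2.1, t.1, t.2.2) + Hf (t.1, t.2.2, t.2.1) + Hf (t.2.2, t.2.1, t.1)
          + Hf (t.2.1, t.2.2, t.1) + Hf (t.2.2, t.1, t.2.1)) :=
      Finset.sum_nonneg fun t _ => hpt t
    rw [h6] at hnn
    linarith
  -- the key identity
  have hPeq : ∑ i : Fin N, ⟪F i, v i⟫ = 2 * S + ∑ t : Fin N × Fin N × Fin N, Hf t := by
    calc ∑ i : Fin N, ⟪F i, v i⟫
        = ∑ i : Fin N,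
            ((∑ j ∈ Finset.univ.filter (fun j => j ≠ i), (‖x i - x j‖ ^ s)⁻¹)
              + ∑ j ∈ Finset.univ.filter (fun j => j ≠ i),
                  ∑ k ∈ (Finset.univ.filter (fun k => k ≠ i)).erase j, h3 i j k) :=
          Finset.sum_congr rfl fun i _ => hinner i
      _ = (∑ i : Fin N, ∑ j ∈ Finset.univ.filter (fun j => j ≠ i), (‖x i - x j‖ ^ s)⁻¹)
            + ∑ i : Fin N, ∑ j ∈ Finset.univ.filter (fun j => j ≠ i),
                ∑ k ∈ (Finset.univ.filter (fun k => k ≠ i)).erase j, h3 i j k :=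
          Finset.sum_add_distrib
      _ = 2 * S + ∑ t : Fin N × Fin N × Fin N, Hf t := by rw [hsym, hDform]
  have hP0 : 2 * S ≤ ∑ i : Fin N, ⟪F i, v i⟫ := by rw [hPeq]; linarith
  -- norm bound on v
  have hvnorm : ∀ i : Fin N, ‖v i‖ ≤ (N : ℝ) - 1 := by
    intro i
    have hcard : (Finset.univ.filter (fun j => j ≠ i)).card = N - 1 := by
      rw [Finset.filter_ne', Finset.card_erase_of_mem (Finset.mem_univ i),
        Finset.card_univ, Fintype.card_fin]
    calc ‖v i‖ ≤ ∑ j ∈ Finset.univ.filter (fun j => j ≠ i),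
          ‖(‖x i - x j‖)⁻¹ • (x i - x j)‖ := by
          rw [hvdef]; exact norm_sum_le _ _
      _ = ∑ j ∈ Finset.univ.filter (fun j => j ≠ i), 1 := by
          apply Finset.sum_congr rfl; intro j hj
          have hp := hr i j (Finset.mem_filter.mp hj).2
          rw [norm_smul, norm_inv, norm_norm]
          exact inv_mul_cancel₀ (ne_of_gt hp)
      _ = (N : ℝ) - 1 := by
          rw [Finset.sum_const, hcard, nsmul_eq_mul, mul_one,
            Nat.cast_sub (by omega : 1 ≤ N), Nat.cast_one]
  have hFnn : 0 ≤ ∑ i : Fin N, ‖F i‖ ^ 2 :=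
    Finset.sum_nonneg fun i _ => sq_nonneg _
  -- Cauchy-Schwarz
  have hCS : (∑ i : Fin N, ⟪F i, v i⟫) ^ 2
      ≤ (∑ i : Fin N, ‖F i‖ ^ 2) * ((N : ℝ) * ((N : ℝ) - 1) ^ 2) := by
    have h1 : (∑ i : Fin N, ⟪F i, v i⟫) ≤ ∑ i : Fin N, ‖F i‖ * ‖v i‖ :=
      Finset.sum_le_sum fun i _ => real_inner_le_norm _ _
    have h0 : 0 ≤ ∑ i : Fin N, ⟪F i, v i⟫ := le_trans (by linarith) hP0
    have h2 : (∑ i : Fin N, ⟪F i, v i⟫) ^ 2 ≤ (∑ i : Fin N, ‖F i‖ * ‖v i‖) ^ 2 :=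
      pow_le_pow_left₀ h0 h1 2
    have h3 : (∑ i : Fin N, ‖F i‖ * ‖v i‖) ^ 2
        ≤ (∑ i : Fin N, ‖F i‖ ^ 2) * (∑ i : Fin N, ‖v i‖ ^ 2) :=
      Finset.sum_mul_sq_le_sq_mul_sq _ _ _
    have h4 : (∑ i : Fin N, ‖v i‖ ^ 2) ≤ (N : ℝ) * ((N : ℝ) - 1) ^ 2 := by
      calc ∑ i : Fin N, ‖v i‖ ^ 2 ≤ ∑ _i : Fin N, ((N : ℝ) - 1) ^ 2 :=
            Finset.sum_le_sum fun i _ => pow_le_pow_left₀ (norm_nonneg _) (hvnorm i) 2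
        _ = (N : ℝ) * ((N : ℝ) - 1) ^ 2 := by
            rw [Finset.sum_const, Finset.card_univ, Fintype.card_fin, nsmul_eq_mul]
    calc (∑ i : Fin N, ⟪F i, v i⟫) ^ 2 ≤ (∑ i : Fin N, ‖F i‖ * ‖v i‖) ^ 2 := h2
      _ ≤ (∑ i : Fin N, ‖F i‖ ^ 2) * (∑ i : Fin N, ‖v i‖ ^ 2) := h3
      _ ≤ (∑ i : Fin N, ‖F i‖ ^ 2) * ((N : ℝ) * ((N : ℝ) - 1) ^ 2) :=
          mul_le_mul_of_nonneg_left h4 hFnn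
  -- main inequality, part 1
  have main1 : (4 / ((N : ℝ) * ((N : ℝ) - 1) ^ 2)) * S ^ 2 ≤ ∑ i : Fin N, ‖F i‖ ^ 2 := by
    have h2S2 : 4 * S ^ 2 ≤ (∑ i : Fin N, ⟪F i, v i⟫) ^ 2 := by
      have h2Snn : (0:ℝ) ≤ 2 * S := by linarith
      have h := pow_le_pow_left₀ h2Snn hP0 2
      calc 4 * S ^ 2 = (2 * S) ^ 2 := by ring
        _ ≤ (∑ i : Fin N, ⟪F i, v i⟫) ^ 2 := h
    have hfin : 4 * S ^ 2 ≤ (∑ i : Fin N, ‖F i‖ ^ 2) * ((N : ℝ) * ((N : ℝ) - 1) ^ 2) :=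
      le_trans h2S2 hCS
    rw [div_mul_eq_mul_div, div_le_iff₀ hK]
    linarith
  -- part 2 : sum of squared terms
  have hS2 : (∑ i : Fin N, ∑ j ∈ Finset.univ.filter (fun j => i < j),
      (‖x i - x j‖ ^ (2 * s))⁻¹) ≤ S ^ 2 := by
    set A : Fin N × Fin N → ℝ := fun t =>
      if t.1 < t.2 then (‖x t.1 - x t.2‖ ^ s)⁻¹ else 0 with hA
    have hAnn : ∀ t : Fin N × Fin N, 0 ≤ A t := by
      intro t
      simp only [hA]
      split
      · exact inv_nonneg.mpr (Real.rpow_nonneg (norm_nonneg _) _)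
      · exact le_rfl
    have hSA : S = ∑ t : Fin N × Fin N, A t := by
      rw [hSdef, Fintype.sum_prod_type]
      apply Finset.sum_congr rfl; intro i _
      rw [Finset.sum_filter]
    have hS2A : (∑ i : Fin N, ∑ j ∈ Finset.univ.filter (fun j => i < j),
        (‖x i - x j‖ ^ (2 * s))⁻¹)
        = ∑ t : Fin N × Fin N, (if t.1 < t.2 then (‖x t.1 - x t.2‖ ^ (2 * s))⁻¹ else 0) := by
      rw [Fintype.sum_prod_type]
      apply Finset.sum_congr rfl; intro i _
      rw [Finset.sum_filter]
    rw [hS2A, hSA]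
    have hptw : ∀ t : Fin N × Fin N,
        (if t.1 < t.2 then (‖x t.1 - x t.2‖ ^ (2 * s))⁻¹ else 0)
          ≤ A t * ∑ u : Fin N × Fin N, A u := by
      intro t
      by_cases ht : t.1 < t.2
      · rw [if_pos ht]
        have hp : (0 : ℝ) < ‖x t.1 - x t.2‖ :=
          norm_sub_pos_iff.mpr (hx t.1 t.2 (ne_of_lt ht))
        have hv : (‖x t.1 - x t.2‖ ^ (2 * s))⁻¹ = A t * A t := by
          simp only [hA, if_pos ht]
          rw [show 2 * s = s + s by ring, Real.rpow_add hp, mul_inv]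
        rw [hv]
        exact mul_le_mul_of_nonneg_left
          (Finset.single_le_sum (fun u _ => hAnn u) (Finset.mem_univ t)) (hAnn t)
      · rw [if_neg ht]
        exact mul_nonneg (hAnn t)
          (Finset.sum_nonneg fun u _ => hAnn u)
    calc ∑ t : Fin N × Fin N, (if t.1 < t.2 then (‖x t.1 - x t.2‖ ^ (2 * s))⁻¹ else 0)
        ≤ ∑ t : Fin N × Fin N, A t * ∑ u : Fin N × Fin N, A u :=
          Finset.sum_le_sum fun t _ => hptw t
      _ = (∑ t : Fin N × Fin N, A t) ^ 2 := by rw [← Finset.sum_mul]; ring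
  have main2 : (4 / ((N : ℝ) * ((N : ℝ) - 1) ^ 2)) *
      (∑ i : Fin N, ∑ j ∈ Finset.univ.filter (fun j => i < j),
        (‖x i - x j‖ ^ (2 * s))⁻¹) ≤ ∑ i : Fin N, ⟪F i, F i⟫ := by
    have heq : ∑ i : Fin N, ⟪F i, F i⟫ = ∑ i : Fin N, ‖F i‖ ^ 2 :=
      Finset.sum_congr rfl fun i _ => real_inner_self_eq_norm_sq _
    calc (4 / ((N : ℝ) * ((N : ℝ) - 1) ^ 2)) *
        (∑ i : Fin N, ∑ j ∈ Finset.univ.filter (fun j => i < j),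
          (‖x i - x j‖ ^ (2 * s))⁻¹)
        ≤ (4 / ((N : ℝ) * ((N : ℝ) - 1) ^ 2)) * S ^ 2 :=
          mul_le_mul_of_nonneg_left hS2 (by positivity)
      _ ≤ ∑ i : Fin N, ‖F i‖ ^ 2 := main1
      _ = ∑ i : Fin N, ⟪F i, F i⟫ := heq.symm
  constructor
  · exact main1
  · exact main2
end

section
/- For every s ∈ [0,1] and every three pairwise distinct points x, y, z ∈ ℝ^d, one has ⟨x−y, x−z⟩/(|x−y|^{s+1} |x−z|^{s+1}) + ⟨y−x, y−z⟩/(|y−x|^{s+1} |y−z|^{s+1}) + ⟨z−x, z−y⟩/(|z−x|^{s+1} |z−y|^{s+1}) ≥ 0. -/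
open scoped RealInnerProductSpace

private lemma key_max (t a b c : ℝ) (ht1 : 1 ≤ t) (ht2 : t ≤ 2)
    (hb : 0 < b) (hc : 0 < c) (hba : b ≤ a) (hca : c ≤ a) (htri : a ≤ b + c) :
    0 ≤ a ^ t * (b ^ 2 + c ^ 2 - a ^ 2) + b ^ t * (a ^ 2 + c ^ 2 - b ^ 2)
      + c ^ t * (a ^ 2 + b ^ 2 - c ^ 2) := by
  have ha : 0 < a := lt_of_lt_of_le hb hba
  have hsplit : ∀ u : ℝ, 0 < u → u ^ t = u ^ (t - 2) * u ^ 2 := by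
    intro u hu
    rw [← Real.rpow_natCast u 2, ← Real.rpow_add hu]
    norm_num
  have hA : 0 < a ^ (t - 2) := Real.rpow_pos_of_pos ha _
  have hB : a ^ (t - 2) ≤ b ^ (t - 2) :=
    Real.rpow_le_rpow_of_nonpos hb hba (by linarith)
  have hC : a ^ (t - 2) ≤ c ^ (t - 2) :=
    Real.rpow_le_rpow_of_nonpos hc hca (by linarith)
  have heron : 0 ≤ a ^ 2 * (b ^ 2 + c ^ 2 - a ^ 2) + b ^ 2 * (a ^ 2 + c ^ 2 - b ^ 2)
      + c ^ 2 * (a ^ 2 + b ^ 2 - c ^ 2) := by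
    nlinarith [mul_nonneg (mul_nonneg (by linarith : (0:ℝ) ≤ b + c - a)
      (by linarith : (0:ℝ) ≤ a + c - b)) (by linarith : (0:ℝ) ≤ a + b - c),
      add_pos (add_pos ha hb) hc]
  rw [hsplit a ha, hsplit b hb, hsplit c hc]
  have hwb : 0 ≤ a ^ 2 + c ^ 2 - b ^ 2 := by nlinarith
  have hwc : 0 ≤ a ^ 2 + b ^ 2 - c ^ 2 := by nlinarith
  nlinarith [mul_nonneg (mul_nonneg (sub_nonneg.2 hB) (sq_nonneg b)) hwb,
    mul_nonneg (mul_nonneg (sub_nonneg.2 hC) (sq_nonneg c)) hwc,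
    mul_nonneg hA.le heron]

private lemma key_sym (t a b c : ℝ) (ht1 : 1 ≤ t) (ht2 : t ≤ 2)
    (ha : 0 < a) (hb : 0 < b) (hc : 0 < c)
    (h1 : a ≤ b + c) (h2 : b ≤ a + c) (h3 : c ≤ a + b) :
    0 ≤ a ^ t * (b ^ 2 + c ^ 2 - a ^ 2) + b ^ t * (a ^ 2 + c ^ 2 - b ^ 2)
      + c ^ t * (a ^ 2 + b ^ 2 - c ^ 2) := by
  rcases le_total a b with hab | hab <;> rcases le_total b c with hbc | hbc <;>
    rcases le_total a c with hac | hac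
  · have := key_max t c a b ht1 ht2 ha hb (by linarith) (by linarith) (by linarith); linarith
  · have := key_max t c a b ht1 ht2 ha hb (by linarith) (by linarith) (by linarith); linarith
  · have := key_max t b a c ht1 ht2 ha hc (by linarith) (by linarith) (by linarith); linarith
  · have := key_max t b a c ht1 ht2 ha hc (by linarith) (by linarith) (by linarith); linarith
  · have := key_max t c a b ht1 ht2 ha hb (by linarith) (by linarith) (by linarith); linarith
  · have := key_max t a b c ht1 ht2 hb hc (by linarith) (by linarith) (by linarith); linarith
  · have := key_max t a b c ht1 ht2 hb hc (by linarith) (by linarith) (by linarith); linarith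
  · have := key_max t a b c ht1 ht2 hb hc (by linarith) (by linarith) (by linarith); linarith

theorem stmt_2 (d : ℕ) (s : ℝ) (hs0 : 0 ≤ s) (hs1 : s ≤ 1)
    (x y z : EuclideanSpace ℝ (Fin d)) (hxy : x ≠ y) (hxz : x ≠ z) (hyz : y ≠ z) :
    ⟪x - y, x - z⟫ / (‖x - y‖ ^ (s + 1) * ‖x - z‖ ^ (s + 1))
      + ⟪y - x, y - z⟫ / (‖y - x‖ ^ (s + 1) * ‖y - z‖ ^ (s + 1))
      + ⟪z - x, z - y⟫ / (‖z - x‖ ^ (s + 1) * ‖z - y‖ ^ (s + 1)) ≥ 0 := by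
  set p := ‖x - y‖ with hp
  set q := ‖x - z‖ with hq
  set r := ‖y - z‖ with hr
  have hp0 : 0 < p := norm_sub_pos_iff.2 hxy
  have hq0 : 0 < q := norm_sub_pos_iff.2 hxz
  have hr0 : 0 < r := norm_sub_pos_iff.2 hyz
  have hyx : ‖y - x‖ = p := norm_sub_rev y x
  have hzx : ‖z - x‖ = q := norm_sub_rev z x
  have hzy : ‖z - y‖ = r := norm_sub_rev z y
  have inner_formula : ∀ u v : EuclideanSpace ℝ (Fin d),
      ⟪u, v⟫ = (‖u‖ ^ 2 + ‖v‖ ^ 2 - ‖u - v‖ ^ 2) / 2 := by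
    intro u v
    have := norm_sub_sq_real u v
    linarith
  have e1 : ⟪x - y, x - z⟫ = (p ^ 2 + q ^ 2 - r ^ 2) / 2 := by
    rw [inner_formula]
    have : (x - y) - (x - z) = z - y := by abel
    rw [this, hzy]
  have e2 : ⟪y - x, y - z⟫ = (p ^ 2 + r ^ 2 - q ^ 2) / 2 := by
    rw [inner_formula]
    have : (y - x) - (y - z) = z - x := by abel
    rw [this, hzx, hyx]
  have e3 : ⟪z - x, z - y⟫ = (q ^ 2 + r ^ 2 - p ^ 2) / 2 := by
    rw [inner_formula]
    have : (z - x) - (z - y) = y - x := by abel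
    rw [this, hyx, hzx, hzy]
  rw [e1, e2, e3, hyx, hzx, hzy]
  set t := s + 1 with ht
  have ht1 : 1 ≤ t := by linarith
  have ht2 : t ≤ 2 := by linarith
  have hpt : 0 < p ^ t := Real.rpow_pos_of_pos hp0 _
  have hqt : 0 < q ^ t := Real.rpow_pos_of_pos hq0 _
  have hrt : 0 < r ^ t := Real.rpow_pos_of_pos hr0 _
  have htri1 : p ≤ q + r := by
    have := dist_triangle x z y
    simp only [dist_eq_norm] at this
    rw [norm_sub_rev z y] at this
    exact this
  have htri2 : q ≤ p + r := by
    have := dist_triangle x y z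
    simp only [dist_eq_norm] at this
    exact this
  have htri3 : r ≤ p + q := by
    have := dist_triangle y x z
    simp only [dist_eq_norm] at this
    rw [norm_sub_rev y x] at this
    exact this
  have hkey := key_sym t p q r ht1 ht2 hp0 hq0 hr0 htri1 htri2 htri3
  have hform : (p ^ 2 + q ^ 2 - r ^ 2) / 2 / (p ^ t * q ^ t)
      + (p ^ 2 + r ^ 2 - q ^ 2) / 2 / (p ^ t * r ^ t)
      + (q ^ 2 + r ^ 2 - p ^ 2) / 2 / (q ^ t * r ^ t)
      = (r ^ t * (p ^ 2 + q ^ 2 - r ^ 2) + q ^ t * (p ^ 2 + r ^ 2 - q ^ 2)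
        + p ^ t * (q ^ 2 + r ^ 2 - p ^ 2)) / (2 * (p ^ t * q ^ t * r ^ t)) := by
    field_simp
  rw [ge_iff_le, hform]
  apply div_nonneg _ (by positivity)
  have hkey2 := key_sym t r q p ht1 ht2 hr0 hq0 hp0 (by linarith) (by linarith) (by linarith)
  linarith
end

section
/- For every integer N ≥ 2, every s ∈ [0,1], and pairwise distinct points x_1,…,x_N ∈ ℝ^d, one has ∑_{i=1}^N ⟨ ∑_{j≠i} (x_i−x_j)/|x_i−x_j|^{s+1} , ∑_{ℓ≠i} (x_i−x_ℓ)/|x_i−x_ℓ|^{s+1} ⟩ ≥ 2 ∑_{1≤i<j≤N} 1/|x_i−x_j|^{2s}. -/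
open scoped RealInnerProductSpace
open Finset

/-!
Write `u_ij = (x_i - x_j) / |x_i - x_j|^t` with `t = s + 1 ≤ 2` and expand
`∑_i |∑_j u_ij|^2 = ∑_{i,j,l} ⟨u_ij, u_il⟩`. The terms with `j = l` give exactly
`∑_{i ≠ j} |x_i - x_j|^{-2s}`. The remaining terms run over triples of distinct indices, and
grouping each triple with its cyclic rotations leaves, for every triangle with side lengths
`p, q, r`, the quantity `(∑ p^t (q^2 + r^2 - p^2)) / (2 p^t q^t r^t)`. It is nonnegative: only the
term of the longest side `p` can be negative, and since `y ↦ y^(t-2)` is antitone,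
`p^2` times the numerator is at least `p^t (∑ p^2 (q^2 + r^2 - p^2))`, which is Heron's
`(p+q+r)(-p+q+r)(p-q+r)(p+q-r) ≥ 0` times `p^t`.
-/

theorem rpow_mul_sq_le_sq_mul_rpow {t p q : ℝ} (ht : t ≤ 2) (hq : 0 < q) (hqp : q ≤ p) :
    p ^ t * q ^ 2 ≤ p ^ 2 * q ^ t := by
  have hp : 0 < p := hq.trans_le hqp
  have hsplit : ∀ y : ℝ, 0 < y → y ^ (2 : ℝ) = y ^ t * y ^ (2 - t) := fun y hy => by
    rw [← Real.rpow_add hy, add_sub_cancel]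
  have hmono : q ^ (2 - t) ≤ p ^ (2 - t) := Real.rpow_le_rpow hq.le hqp (by linarith)
  rw [← Real.rpow_two, ← Real.rpow_two, hsplit q hq, hsplit p hp]
  calc p ^ t * (q ^ t * q ^ (2 - t)) = p ^ t * q ^ t * q ^ (2 - t) := by ring
    _ ≤ p ^ t * q ^ t * p ^ (2 - t) := by gcongr
    _ = p ^ t * p ^ (2 - t) * q ^ t := by ring

theorem heron_nonneg {p q r : ℝ} (h₁ : p ≤ q + r) (h₂ : q ≤ p + r) (h₃ : r ≤ p + q) :
    0 ≤ p ^ 2 * (q ^ 2 + r ^ 2 - p ^ 2) + q ^ 2 * (r ^ 2 + p ^ 2 - q ^ 2)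
      + r ^ 2 * (p ^ 2 + q ^ 2 - r ^ 2) := by
  calc 0 ≤ (q + r - p) * (p + r - q) * (p + q - r) * (p + q + r) :=
        mul_nonneg (mul_nonneg (mul_nonneg (sub_nonneg.2 h₁) (sub_nonneg.2 h₂))
          (sub_nonneg.2 h₃)) (by linarith)
    _ = p ^ 2 * (q ^ 2 + r ^ 2 - p ^ 2) + q ^ 2 * (r ^ 2 + p ^ 2 - q ^ 2)
          + r ^ 2 * (p ^ 2 + q ^ 2 - r ^ 2) := by ring

theorem rpow_heron_nonneg_of_le {t p q r : ℝ} (ht : t ≤ 2) (hq : 0 < q) (hr : 0 < r)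
    (hqp : q ≤ p) (hrp : r ≤ p) (htri : p ≤ q + r) :
    0 ≤ p ^ t * (q ^ 2 + r ^ 2 - p ^ 2) + q ^ t * (r ^ 2 + p ^ 2 - q ^ 2)
      + r ^ t * (p ^ 2 + q ^ 2 - r ^ 2) := by
  have hp : 0 < p := hq.trans_le hqp
  have hq' := rpow_mul_sq_le_sq_mul_rpow ht hq hqp
  have hr' := rpow_mul_sq_le_sq_mul_rpow ht hr hrp
  have hheron := heron_nonneg htri (by linarith) (by linarith)
  have hpt : 0 < p ^ t := Real.rpow_pos_of_pos hp t
  have hB : 0 ≤ r ^ 2 + p ^ 2 - q ^ 2 := by nlinarith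
  have hC : 0 ≤ p ^ 2 + q ^ 2 - r ^ 2 := by nlinarith
  have key : 0 ≤ p ^ 2 * (p ^ t * (q ^ 2 + r ^ 2 - p ^ 2) + q ^ t * (r ^ 2 + p ^ 2 - q ^ 2)
      + r ^ t * (p ^ 2 + q ^ 2 - r ^ 2)) := by
    nlinarith [mul_nonneg (sub_nonneg.2 hq') hB, mul_nonneg (sub_nonneg.2 hr') hC,
      mul_nonneg hpt.le hheron]
  exact nonneg_of_mul_nonneg_right key (by positivity : (0 : ℝ) < p ^ 2)

theorem rpow_heron_nonneg {t p q r : ℝ} (ht : t ≤ 2) (hp : 0 < p) (hq : 0 < q) (hr : 0 < r)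
    (h₁ : p ≤ q + r) (h₂ : q ≤ p + r) (h₃ : r ≤ p + q) :
    0 ≤ p ^ t * (q ^ 2 + r ^ 2 - p ^ 2) + q ^ t * (r ^ 2 + p ^ 2 - q ^ 2)
      + r ^ t * (p ^ 2 + q ^ 2 - r ^ 2) := by
  rcases le_total q p with hqp | hpq
  · rcases le_total r p with hrp | hpr
    · exact rpow_heron_nonneg_of_le ht hq hr hqp hrp h₁
    · linarith [rpow_heron_nonneg_of_le ht hp hq hpr (by linarith) h₃]
  · rcases le_total r q with hrq | hqr
    · linarith [rpow_heron_nonneg_of_le ht hp hr hpq hrq h₂]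
    · linarith [rpow_heron_nonneg_of_le ht hp hq (by linarith) hqr h₃]

theorem sum_cyclic_nonneg {ι : Type*} [Fintype ι] {F : ι → ι → ι → ℝ}
    (h : ∀ i j l, 0 ≤ F i j l + F j l i + F l i j) : 0 ≤ ∑ i, ∑ j, ∑ l, F i j l := by
  have hrot : ∀ G : ι → ι → ι → ℝ, ∑ i, ∑ j, ∑ l, G j l i = ∑ i, ∑ j, ∑ l, G i j l :=
    fun G => by rw [sum_comm]; exact sum_congr rfl fun _ _ => sum_comm
  have h3 : ∑ i, ∑ j, ∑ l, (F i j l + F j l i + F l i j) = 3 * ∑ i, ∑ j, ∑ l, F i j l := by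
    simp only [sum_add_distrib]
    rw [hrot F, hrot fun i j l => F j l i, hrot F]
    ring
  have := sum_nonneg fun i (_ : i ∈ univ) => sum_nonneg fun j (_ : j ∈ univ) =>
    sum_nonneg fun l (_ : l ∈ univ) => h i j l
  linarith

theorem sum_sum_eq_two_nsmul_sum_filter_lt {ι M : Type*} [Fintype ι] [LinearOrder ι]
    [AddCommMonoid M] {h : ι → ι → M} (hsymm : ∀ i j, h i j = h j i) (hdiag : ∀ i, h i i = 0) :
    ∑ i, ∑ j, h i j = 2 • ∑ i, ∑ j ∈ univ.filter (i < ·), h i j := by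
  calc ∑ i, ∑ j, h i j
      = ∑ i, ∑ j, ((if i < j then h i j else 0) + if j < i then h j i else 0) := by
        refine sum_congr rfl fun i _ => sum_congr rfl fun j _ => ?_
        rcases lt_trichotomy i j with hij | rfl | hji
        · simp [hij, hij.not_gt]
        · simp [hdiag]
        · simp [hji, hji.not_gt, hsymm i j]
    _ = 2 • ∑ i, ∑ j ∈ univ.filter (i < ·), h i j := by
        rw [two_nsmul]
        simp only [sum_add_distrib, sum_filter]
        exact congrArg _ sum_comm

theorem sum_sum_diag_le_sum_sum_sum {ι : Type*} [Fintype ι] {F : ι → ι → ι → ℝ}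
    (h₁ : ∀ i l, F i i l = 0) (h₂ : ∀ i j, F i j i = 0)
    (hcyc : ∀ i j l, i ≠ j → j ≠ l → l ≠ i → 0 ≤ F i j l + F j l i + F l i j) :
    ∑ i, ∑ j, F i j j ≤ ∑ i, ∑ j, ∑ l, F i j l := by
  classical
  set D : ι → ι → ι → ℝ := fun i j l => if i ≠ j ∧ j ≠ l ∧ l ≠ i then F i j l else 0
  have hsplit : ∀ i j l, F i j l = D i j l + if j = l then F i j j else 0 := by
    intro i j l
    by_cases hjl : j = l
    · subst hjl; simp [D]
    · by_cases hij : i = j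
      · subst hij; simp [D, h₁]
      · by_cases hli : l = i
        · subst hli; simp [D, h₂, hjl]
        · simp [D, hij, hjl, hli]
  have hD : 0 ≤ ∑ i, ∑ j, ∑ l, D i j l := by
    refine sum_cyclic_nonneg fun i j l => ?_
    by_cases h : i ≠ j ∧ j ≠ l ∧ l ≠ i
    · simp only [D, if_pos h, if_pos (show j ≠ l ∧ l ≠ i ∧ i ≠ j from ⟨h.2.1, h.2.2, h.1⟩),
        if_pos (show l ≠ i ∧ i ≠ j ∧ j ≠ l from ⟨h.2.2, h.1, h.2.1⟩)]
      exact hcyc i j l h.1 h.2.1 h.2.2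
    · have hjli : ¬(j ≠ l ∧ l ≠ i ∧ i ≠ j) := fun h' => h ⟨h'.2.2, h'.1, h'.2.1⟩
      have hlij : ¬(l ≠ i ∧ i ≠ j ∧ j ≠ l) := fun h' => h ⟨h'.2.1, h'.2.2, h'.1⟩
      simp only [D, if_neg h, if_neg hjli, if_neg hlij, add_zero, le_refl]
  have hdecomp : ∑ i, ∑ j, ∑ l, F i j l = ∑ i, ∑ j, ∑ l, D i j l + ∑ i, ∑ j, F i j j := by
    rw [sum_congr rfl fun i _ => sum_congr rfl fun j _ => sum_congr rfl fun l _ => hsplit i j l]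
    simp only [sum_add_distrib, sum_ite_eq, mem_univ, if_true]
  rw [hdecomp]
  exact le_add_of_nonneg_left hD

section Riesz

variable {E : Type*} [NormedAddCommGroup E] [InnerProductSpace ℝ E]

noncomputable def rieszForce (t : ℝ) (v : E) : E := (‖v‖ ^ t)⁻¹ • v

@[simp]
theorem rieszForce_zero (t : ℝ) : rieszForce t (0 : E) = 0 := smul_zero _

theorem rieszForce_neg (t : ℝ) (v : E) : rieszForce t (-v) = -rieszForce t v := by
  simp [rieszForce]

theorem inner_rieszForce (t : ℝ) (v w : E) :
    ⟪rieszForce t v, rieszForce t w⟫ = (‖v‖ ^ t)⁻¹ * (‖w‖ ^ t)⁻¹ * ⟪v, w⟫ := by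
  rw [rieszForce, rieszForce, real_inner_smul_left, real_inner_smul_right]
  ring

theorem norm_rieszForce_sq {v : E} (hv : v ≠ 0) (s : ℝ) :
    ‖rieszForce (s + 1) v‖ ^ 2 = (‖v‖ ^ (2 * s))⁻¹ := by
  have hr : 0 < ‖v‖ := norm_pos_iff.2 hv
  have key : (‖v‖ ^ (s + 1)) ^ 2 = ‖v‖ ^ (2 * s) * ‖v‖ ^ 2 := by
    rw [← Real.rpow_natCast, ← Real.rpow_mul hr.le, ← Real.rpow_natCast, ← Real.rpow_add hr]
    ring_nf
  rw [rieszForce, norm_smul, norm_inv, Real.norm_of_nonneg (by positivity), mul_pow, inv_pow,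
    key, mul_inv, inv_mul_cancel_right₀ (by positivity)]

theorem inner_sub_sub_eq (a b c : E) :
    ⟪a - b, a - c⟫ = (‖a - b‖ ^ 2 + ‖a - c‖ ^ 2 - ‖b - c‖ ^ 2) / 2 := by
  have h := norm_sub_sq_real (a - b) (a - c)
  rw [show a - b - (a - c) = c - b by abel, norm_sub_rev c b] at h
  linarith

theorem inner_rieszForce_cyclic_nonneg {t : ℝ} (ht : t ≤ 2) {a b c : E}
    (hab : a ≠ b) (hbc : b ≠ c) (hca : c ≠ a) :
    0 ≤ ⟪rieszForce t (a - b), rieszForce t (a - c)⟫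
      + ⟪rieszForce t (b - c), rieszForce t (b - a)⟫
      + ⟪rieszForce t (c - a), rieszForce t (c - b)⟫ := by
  simp only [inner_rieszForce, inner_sub_sub_eq, norm_sub_rev b a, norm_sub_rev c a,
    norm_sub_rev c b]
  have hp : 0 < ‖b - c‖ := norm_pos_iff.2 (sub_ne_zero.2 hbc)
  have hq : 0 < ‖a - c‖ := norm_pos_iff.2 (sub_ne_zero.2 hca.symm)
  have hr : 0 < ‖a - b‖ := norm_pos_iff.2 (sub_ne_zero.2 hab)
  have h₁ : ‖b - c‖ ≤ ‖a - c‖ + ‖a - b‖ := by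
    linarith [norm_sub_le_norm_sub_add_norm_sub b a c, norm_sub_rev a b]
  have h₂ : ‖a - c‖ ≤ ‖b - c‖ + ‖a - b‖ := by
    linarith [norm_sub_le_norm_sub_add_norm_sub a b c]
  have h₃ : ‖a - b‖ ≤ ‖b - c‖ + ‖a - c‖ := by
    linarith [norm_sub_le_norm_sub_add_norm_sub a c b, norm_sub_rev c b]
  have hG := rpow_heron_nonneg ht hp hq hr h₁ h₂ h₃
  set p := ‖b - c‖
  set q := ‖a - c‖
  set r := ‖a - b‖
  have hpt := Real.rpow_pos_of_pos hp t
  have hqt := Real.rpow_pos_of_pos hq t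
  have hrt := Real.rpow_pos_of_pos hr t
  refine (div_nonneg hG (by positivity : (0 : ℝ) ≤ 2 * (p ^ t * q ^ t * r ^ t))).trans_eq ?_
  field_simp
  ring

theorem two_mul_sum_inv_rpow_le_sum_norm_sum_rieszForce_sq {ι : Type*} [Fintype ι]
    [LinearOrder ι] {s : ℝ} (hs : s ≤ 1) {x : ι → E} (hx : Function.Injective x) :
    2 * ∑ i, ∑ j ∈ univ.filter (i < ·), (‖x i - x j‖ ^ (2 * s))⁻¹
      ≤ ∑ i, ‖∑ j, rieszForce (s + 1) (x i - x j)‖ ^ 2 := by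
  set G : ι → ι → ι → ℝ := fun i j l =>
    ⟪rieszForce (s + 1) (x i - x j), rieszForce (s + 1) (x i - x l)⟫
  have hexpand : ∑ i, ‖∑ j, rieszForce (s + 1) (x i - x j)‖ ^ 2 = ∑ i, ∑ j, ∑ l, G i j l := by
    simp only [G, ← real_inner_self_eq_norm_sq, sum_inner]
    simp only [inner_sum]
  have hpairs : ∑ i, ∑ j, G i j j
      = 2 * ∑ i, ∑ j ∈ univ.filter (i < ·), (‖x i - x j‖ ^ (2 * s))⁻¹ := by
    simp only [G, real_inner_self_eq_norm_sq]
    rw [sum_sum_eq_two_nsmul_sum_filter_lt, nsmul_eq_mul, Nat.cast_ofNat]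
    · refine congrArg _ (sum_congr rfl fun i _ => sum_congr rfl fun j hj => ?_)
      exact norm_rieszForce_sq (sub_ne_zero.2 (hx.ne (mem_filter.1 hj).2.ne)) s
    · intro i j
      rw [← neg_sub, rieszForce_neg, norm_neg]
    · simp
  rw [hexpand, ← hpairs]
  refine sum_sum_diag_le_sum_sum_sum (by simp [G]) (by simp [G]) fun i j l hij hjl hli => ?_
  exact inner_rieszForce_cyclic_nonneg (by linarith) (hx.ne hij) (hx.ne hjl) (hx.ne hli)

end Riesz

theorem stmt_3_general (N d : ℕ) (s : ℝ) (hs1 : s ≤ 1)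
    (x : Fin N → EuclideanSpace ℝ (Fin d))
    (hx : ∀ i j : Fin N, i ≠ j → x i ≠ x j) :
    ∑ i : Fin N,
      ⟪∑ j ∈ Finset.univ.filter (fun j => j ≠ i), (‖x i - x j‖ ^ (s + 1))⁻¹ • (x i - x j),
        ∑ l ∈ Finset.univ.filter (fun l => l ≠ i), (‖x i - x l‖ ^ (s + 1))⁻¹ • (x i - x l)⟫
      ≥ 2 * ∑ i : Fin N, ∑ j ∈ Finset.univ.filter (fun j => i < j),
          (‖x i - x j‖ ^ (2 * s))⁻¹ := by
  have hdrop : ∀ i, ∑ j ∈ univ.filter (fun j => j ≠ i), (‖x i - x j‖ ^ (s + 1))⁻¹ • (x i - x j)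
      = ∑ j, rieszForce (s + 1) (x i - x j) :=
    fun i => sum_filter_of_ne fun j _ hj => by rintro rfl; simp at hj
  simp only [hdrop, real_inner_self_eq_norm_sq]
  exact two_mul_sum_inv_rpow_le_sum_norm_sum_rieszForce_sq hs1
    fun i j hij => by_contra fun hne => hx i j hne hij

theorem stmt_3 (N d : ℕ) (hN : 2 ≤ N) (s : ℝ) (hs0 : 0 ≤ s) (hs1 : s ≤ 1)
    (x : Fin N → EuclideanSpace ℝ (Fin d))
    (hx : ∀ i j : Fin N, i ≠ j → x i ≠ x j) :
    ∑ i : Fin N,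
      ⟪∑ j ∈ Finset.univ.filter (fun j => j ≠ i), (‖x i - x j‖ ^ (s + 1))⁻¹ • (x i - x j),
        ∑ l ∈ Finset.univ.filter (fun l => l ≠ i), (‖x i - x l‖ ^ (s + 1))⁻¹ • (x i - x l)⟫
      ≥ 2 * ∑ i : Fin N, ∑ j ∈ Finset.univ.filter (fun j => i < j),
          (‖x i - x j‖ ^ (2 * s))⁻¹ :=
  stmt_3_general N d s hs1 x hx
end

section
/- Let N ≥ 2 and let G : ℝ^d \ {0} → ℝ be C^1 satisfying, for constants a_4 > 0, a_5, a_6 ≥ 0 and exponents β_1 ≥ 1, 0 ≤ β_2 < β_1, the bound |∇G(x) + a_4 x/|x|^{β_1+1}| ≤ a_5/|x|^{β_2} + a_6 for all x ≠ 0. Then there exists a constant C ≥ 0 such that for all pairwise distinct x_1,…,x_N ∈ ℝ^d, ∑_{i=1}^N ⟨ ∑_{j≠i} (x_i−x_j)/|x_i−x_j| , ∑_{ℓ≠i} ∇G(x_i−x_ℓ) ⟩ ≤ −a_4 ∑_{1≤i<j≤N} 1/|x_i−x_j|^{β_1} + C. -/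
open scoped RealInnerProductSpace
open Finset

-- monotonicity of x/|x|
lemma mono_aux {E : Type*} [NormedAddCommGroup E] [InnerProductSpace ℝ E]
    (a b : E) (ha : a ≠ 0) (hb : b ≠ 0) :
    0 ≤ ⟪‖a‖⁻¹ • a - ‖b‖⁻¹ • b, a - b⟫ := by
  have hna : (0:ℝ) < ‖a‖ := norm_pos_iff.mpr ha
  have hnb : (0:ℝ) < ‖b‖ := norm_pos_iff.mpr hb
  have h1 : ⟪‖a‖⁻¹ • a - ‖b‖⁻¹ • b, a - b⟫
      = ‖a‖ + ‖b‖ - ⟪a, b⟫ * (‖a‖⁻¹ + ‖b‖⁻¹) := by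
    rw [inner_sub_left, inner_sub_right, inner_sub_right]
    rw [real_inner_smul_left, real_inner_smul_left, real_inner_smul_left, real_inner_smul_left]
    rw [real_inner_self_eq_norm_sq, real_inner_self_eq_norm_sq, real_inner_comm b a]
    field_simp
    ring
  rw [h1]
  have h2 : ⟪a, b⟫ * (‖a‖⁻¹ + ‖b‖⁻¹) ≤ ‖a‖ * ‖b‖ * (‖a‖⁻¹ + ‖b‖⁻¹) := by
    apply mul_le_mul_of_nonneg_right (real_inner_le_norm a b)
    positivity
  have h3 : ‖a‖ * ‖b‖ * (‖a‖⁻¹ + ‖b‖⁻¹) = ‖a‖ + ‖b‖ := by field_simp; ring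
  linarith

-- pointwise absorption
lemma absorb (a4 A β1 β2 : ℝ) (ha4 : 0 < a4) (hA : 0 < A) (hβ2 : 0 ≤ β2) (hβ : β2 < β1)
    (r : ℝ) (hr : 0 < r) :
    A * (r ^ β2)⁻¹ ≤ (a4/2) * (r ^ β1)⁻¹
      + A * (((a4/(2*A)) ^ (β1 - β2)⁻¹) ^ β2)⁻¹ := by
  set r0 : ℝ := (a4/(2*A)) ^ (β1 - β2)⁻¹ with hr0def
  have hq : (0:ℝ) < a4/(2*A) := by positivity
  have hr0 : 0 < r0 := Real.rpow_pos_of_pos hq _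
  have hβδ : (0:ℝ) < β1 - β2 := by linarith
  have hr0pow : r0 ^ (β1 - β2) = a4/(2*A) := Real.rpow_inv_rpow hq.le (by linarith)
  rcases le_total r r0 with h | h
  · have key : A * (r ^ β2)⁻¹ ≤ (a4/2) * (r ^ β1)⁻¹ := by
      have h1 : r ^ β1 = r ^ β2 * r ^ (β1 - β2) := by
        rw [← Real.rpow_add hr]; ring_nf
      have h2 : A * r ^ (β1 - β2) ≤ a4/2 := by
        calc A * r ^ (β1 - β2) ≤ A * r0 ^ (β1 - β2) := by
              exact mul_le_mul_of_nonneg_left (Real.rpow_le_rpow hr.le h hβδ.le) hA.le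
          _ = a4/2 := by rw [hr0pow]; field_simp
      have h3 := mul_le_mul_of_nonneg_right h2
        (le_of_lt (inv_pos.mpr (Real.rpow_pos_of_pos hr β1)))
      have e : A * r ^ (β1 - β2) * (r ^ β1)⁻¹ = A * (r ^ β2)⁻¹ := by
        rw [h1]
        have h4 := (Real.rpow_pos_of_pos hr (β1-β2)).ne'
        have h5 := (Real.rpow_pos_of_pos hr β2).ne'
        field_simp
      linarith
    have : 0 ≤ A * (r0 ^ β2)⁻¹ := by positivity
    linarith
  · have key : A * (r ^ β2)⁻¹ ≤ A * (r0 ^ β2)⁻¹ := by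
      apply mul_le_mul_of_nonneg_left _ hA.le
      apply inv_anti₀ (Real.rpow_pos_of_pos hr0 _)
      exact Real.rpow_le_rpow hr0.le h hβ2
    have : 0 ≤ (a4/2) * (r ^ β1)⁻¹ := by positivity
    linarith

lemma sum_pairs {N : ℕ} (f : Fin N → Fin N → ℝ) (hf : ∀ i j, f i j = f j i) :
    ∑ i, ∑ j ∈ univ.filter (fun j => j ≠ i), f i j
      = 2 * ∑ i, ∑ j ∈ univ.filter (fun j => i < j), f i j := by
  have hsplit : ∀ i : Fin N, (univ.filter (fun j => j ≠ i))
      = (univ.filter (fun j => i < j)) ∪ (univ.filter (fun j => j < i)) := by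
    intro i; ext j
    simp only [mem_filter, mem_union, mem_univ, true_and, ne_iff_lt_or_gt]
    tauto
  have hdisj : ∀ i : Fin N, Disjoint (univ.filter (fun j => i < j))
      (univ.filter (fun j => j < i)) := by
    intro i
    rw [Finset.disjoint_left]
    intro j hj hj'
    simp only [mem_filter] at hj hj'
    exact absurd hj'.2 (lt_asymm hj.2)
  have h1 : ∑ i, ∑ j ∈ univ.filter (fun j => j ≠ i), f i j
      = (∑ i, ∑ j ∈ univ.filter (fun j => i < j), f i j)
        + ∑ i, ∑ j ∈ univ.filter (fun j => j < i), f i j := by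
    rw [← Finset.sum_add_distrib]
    refine Finset.sum_congr rfl fun i _ => ?_
    rw [hsplit i, Finset.sum_union (hdisj i)]
  have h2 : ∑ i, ∑ j ∈ univ.filter (fun j => j < i), f i j
      = ∑ i, ∑ j ∈ univ.filter (fun j => i < j), f i j := by
    rw [Finset.sum_comm' (s := univ) (t := fun i => univ.filter (fun j => j < i))
      (t' := univ) (s' := fun j => univ.filter (fun i => j < i))
      (by intro i j; simp [mem_filter])]
    refine Finset.sum_congr rfl fun j _ => Finset.sum_congr rfl fun i _ => hf i j
  rw [h1, h2]; ring

lemma triple_nonneg {N : ℕ} (g : Fin N → Fin N → Fin N → ℝ)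
    (hg : ∀ i j l, j ≠ i → l ≠ i → l ≠ j → 0 ≤ g i j l + g l j i) :
    0 ≤ ∑ i, ∑ j ∈ univ.filter (fun j => j ≠ i),
        ∑ l ∈ (univ.filter (fun l => l ≠ i)).erase j, g i j l := by
  set T : Finset (Fin N × Fin N × Fin N) :=
    univ.filter (fun t => t.2.1 ≠ t.1 ∧ t.2.2 ≠ t.1 ∧ t.2.2 ≠ t.2.1) with hTdef
  have hT : ∑ t ∈ T, g t.1 t.2.1 t.2.2
      = ∑ i, ∑ j ∈ univ.filter (fun j => j ≠ i),
          ∑ l ∈ (univ.filter (fun l => l ≠ i)).erase j, g i j l := by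
    rw [hTdef, Finset.sum_filter]
    simp only [Fintype.sum_prod_type]
    refine Finset.sum_congr rfl fun i _ => ?_
    rw [Finset.sum_filter]
    refine Finset.sum_congr rfl fun j _ => ?_
    by_cases hj : j ≠ i
    · rw [if_pos hj]
      have he : (univ.filter (fun l => l ≠ i)).erase j
          = univ.filter (fun l => l ≠ i ∧ l ≠ j) := by
        ext l; simp only [Finset.mem_erase, mem_filter, mem_univ, true_and]; tauto
      rw [he, Finset.sum_filter]
      refine Finset.sum_congr rfl fun l _ => ?_
      by_cases hl : l ≠ i ∧ l ≠ j
      · rw [if_pos ⟨hj, hl.1, hl.2⟩, if_pos hl]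
      · rw [if_neg (by tauto), if_neg hl]
    · rw [if_neg hj]
      refine Finset.sum_eq_zero fun l _ => by
        rw [if_neg (by tauto)]
  have hswap : ∑ t ∈ T, g t.1 t.2.1 t.2.2 = ∑ t ∈ T, g t.2.2 t.2.1 t.1 := by
    apply Finset.sum_nbij' (i := fun t => (t.2.2, t.2.1, t.1)) (j := fun t => (t.2.2, t.2.1, t.1))
    · intro a ha; simp only [hTdef, mem_filter, mem_univ, true_and] at ha ⊢; tauto
    · intro a ha; simp only [hTdef, mem_filter, mem_univ, true_and] at ha ⊢; tauto
    · intro a _; rfl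
    · intro a _; rfl
    · intro a _; rfl
  have h2 : 0 ≤ 2 * ∑ t ∈ T, g t.1 t.2.1 t.2.2 := by
    have : 2 * ∑ t ∈ T, g t.1 t.2.1 t.2.2
        = ∑ t ∈ T, (g t.1 t.2.1 t.2.2 + g t.2.2 t.2.1 t.1) := by
      rw [Finset.sum_add_distrib, ← hswap]; ring
    rw [this]
    refine Finset.sum_nonneg fun t ht => ?_
    simp only [hTdef, mem_filter, mem_univ, true_and] at ht
    exact hg t.1 t.2.1 t.2.2 ht.1 ht.2.1 ht.2.2
  rw [← hT]; linarith

lemma main_est {N d : ℕ} (hN : 2 ≤ N)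
    (Gr : EuclideanSpace ℝ (Fin d) → EuclideanSpace ℝ (Fin d))
    (a4 a5 a6 β1 β2 A C' : ℝ) (ha4 : 0 < a4) (ha5 : 0 ≤ a5) (ha6 : 0 ≤ a6)
    (hβ2 : 0 ≤ β2) (hβ : β2 < β1)
    (hA1 : a5 * ((N:ℝ) - 1) ≤ A) (hA : 0 < A) (hC' : 0 ≤ C')
    (habs : ∀ r : ℝ, 0 < r → A * (r ^ β2)⁻¹ ≤ (a4/2) * (r ^ β1)⁻¹ + C')
    (hbound : ∀ y : EuclideanSpace ℝ (Fin d), y ≠ 0 →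
      ‖Gr y + (a4 * (‖y‖ ^ (β1 + 1))⁻¹) • y‖ ≤ a5 / ‖y‖ ^ β2 + a6)
    (x : Fin N → EuclideanSpace ℝ (Fin d)) (hx : ∀ i j, i ≠ j → x i ≠ x j) :
    ∑ i : Fin N,
        ⟪∑ j ∈ Finset.univ.filter (fun j => j ≠ i), (‖x i - x j‖)⁻¹ • (x i - x j),
          ∑ l ∈ Finset.univ.filter (fun l => l ≠ i), Gr (x i - x l)⟫
      ≤ -a4 * (∑ i : Fin N, ∑ j ∈ Finset.univ.filter (fun j => i < j),
            (‖x i - x j‖ ^ β1)⁻¹)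
        + (N:ℝ) * ((N:ℝ) - 1) * (C' + ((N:ℝ) - 1) * a6) := by
  have hN1 : (1:ℝ) ≤ (N:ℝ) - 1 := by
    have h2 : (2:ℝ) ≤ (N:ℝ) := by exact_mod_cast hN
    linarith
  have hz : ∀ i j : Fin N, j ≠ i → x i - x j ≠ 0 :=
    fun i j h => sub_ne_zero_of_ne (hx i j h.symm)
  have hr : ∀ i j : Fin N, j ≠ i → 0 < ‖x i - x j‖ :=
    fun i j h => norm_pos_iff.mpr (hz i j h)
  have hcard : ∀ i : Fin N, ((univ.filter (fun j => j ≠ i)).card : ℝ) = (N:ℝ) - 1 := by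
    intro i
    rw [Finset.filter_ne', Finset.card_erase_of_mem (Finset.mem_univ i), Finset.card_univ,
      Fintype.card_fin, Nat.cast_sub (by omega)]
    norm_num
  -- abbreviations as plain expressions
  set S : ℝ := ∑ i : Fin N, ∑ j ∈ Finset.univ.filter (fun j => i < j), (‖x i - x j‖ ^ β1)⁻¹
    with hSdef
  -- per-i decomposition
  have hdecomp : ∀ i : Fin N,
      ⟪∑ j ∈ Finset.univ.filter (fun j => j ≠ i), (‖x i - x j‖)⁻¹ • (x i - x j),
        ∑ l ∈ Finset.univ.filter (fun l => l ≠ i), Gr (x i - x l)⟫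
      = ⟪∑ j ∈ Finset.univ.filter (fun j => j ≠ i), (‖x i - x j‖)⁻¹ • (x i - x j),
          ∑ l ∈ Finset.univ.filter (fun l => l ≠ i),
            (Gr (x i - x l) + (a4 * (‖x i - x l‖ ^ (β1 + 1))⁻¹) • (x i - x l))⟫
        - ∑ j ∈ Finset.univ.filter (fun j => j ≠ i), ∑ l ∈ Finset.univ.filter (fun l => l ≠ i),
            ⟪(‖x i - x j‖)⁻¹ • (x i - x j),
              (a4 * (‖x i - x l‖ ^ (β1 + 1))⁻¹) • (x i - x l)⟫ := by
    intro i
    have e1 : ∑ j ∈ Finset.univ.filter (fun j => j ≠ i), ∑ l ∈ Finset.univ.filter (fun l => l ≠ i),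
            ⟪(‖x i - x j‖)⁻¹ • (x i - x j),
              (a4 * (‖x i - x l‖ ^ (β1 + 1))⁻¹) • (x i - x l)⟫
        = ⟪∑ j ∈ Finset.univ.filter (fun j => j ≠ i), (‖x i - x j‖)⁻¹ • (x i - x j),
            ∑ l ∈ Finset.univ.filter (fun l => l ≠ i),
              (a4 * (‖x i - x l‖ ^ (β1 + 1))⁻¹) • (x i - x l)⟫ := by
      rw [sum_inner]
      exact Finset.sum_congr rfl fun j _ => (inner_sum _ _ _).symm
    rw [e1, Finset.sum_add_distrib, inner_add_right]
    ring
  -- the repulsion term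
  have hW : 2 * (a4 * S)
      ≤ ∑ i : Fin N, ∑ j ∈ Finset.univ.filter (fun j => j ≠ i),
          ∑ l ∈ Finset.univ.filter (fun l => l ≠ i),
            ⟪(‖x i - x j‖)⁻¹ • (x i - x j),
              (a4 * (‖x i - x l‖ ^ (β1 + 1))⁻¹) • (x i - x l)⟫ := by
    have hsplit : ∑ i : Fin N, ∑ j ∈ Finset.univ.filter (fun j => j ≠ i),
          ∑ l ∈ Finset.univ.filter (fun l => l ≠ i),
            ⟪(‖x i - x j‖)⁻¹ • (x i - x j),
              (a4 * (‖x i - x l‖ ^ (β1 + 1))⁻¹) • (x i - x l)⟫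
        = (∑ i : Fin N, ∑ j ∈ Finset.univ.filter (fun j => j ≠ i),
            ⟪(‖x i - x j‖)⁻¹ • (x i - x j),
              (a4 * (‖x i - x j‖ ^ (β1 + 1))⁻¹) • (x i - x j)⟫)
          + ∑ i : Fin N, ∑ j ∈ Finset.univ.filter (fun j => j ≠ i),
              ∑ l ∈ (Finset.univ.filter (fun l => l ≠ i)).erase j,
                ⟪(‖x i - x j‖)⁻¹ • (x i - x j),
                  (a4 * (‖x i - x l‖ ^ (β1 + 1))⁻¹) • (x i - x l)⟫ := by
      rw [← Finset.sum_add_distrib]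
      refine Finset.sum_congr rfl fun i _ => ?_
      rw [← Finset.sum_add_distrib]
      refine Finset.sum_congr rfl fun j hj => ?_
      exact (Finset.add_sum_erase _ _ hj).symm
    have hdiag : ∀ i j : Fin N, j ≠ i →
        ⟪(‖x i - x j‖)⁻¹ • (x i - x j),
          (a4 * (‖x i - x j‖ ^ (β1 + 1))⁻¹) • (x i - x j)⟫
        = a4 * (‖x i - x j‖ ^ β1)⁻¹ := by
      intro i j hj
      rw [real_inner_smul_left, real_inner_smul_right, real_inner_self_eq_norm_sq]
      have hrp := hr i j hj
      have h1 : ‖x i - x j‖ ^ (β1 + 1) = ‖x i - x j‖ ^ β1 * ‖x i - x j‖ := by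
        rw [Real.rpow_add hrp, Real.rpow_one]
      have h2 := (Real.rpow_pos_of_pos hrp β1).ne'
      rw [h1]
      field_simp
    have hdiagsum : ∑ i : Fin N, ∑ j ∈ Finset.univ.filter (fun j => j ≠ i),
          ⟪(‖x i - x j‖)⁻¹ • (x i - x j),
            (a4 * (‖x i - x j‖ ^ (β1 + 1))⁻¹) • (x i - x j)⟫
        = 2 * (a4 * S) := by
      have e : ∑ i : Fin N, ∑ j ∈ Finset.univ.filter (fun j => j ≠ i),
            ⟪(‖x i - x j‖)⁻¹ • (x i - x j),
              (a4 * (‖x i - x j‖ ^ (β1 + 1))⁻¹) • (x i - x j)⟫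
          = ∑ i : Fin N, ∑ j ∈ Finset.univ.filter (fun j => j ≠ i),
              a4 * (‖x i - x j‖ ^ β1)⁻¹ :=
        Finset.sum_congr rfl fun i _ => Finset.sum_congr rfl fun j hj =>
          hdiag i j (Finset.mem_filter.mp hj).2
      rw [e, sum_pairs (fun i j => a4 * (‖x i - x j‖ ^ β1)⁻¹)
        (fun i j => show a4 * (‖x i - x j‖ ^ β1)⁻¹ = a4 * (‖x j - x i‖ ^ β1)⁻¹ by
          rw [norm_sub_rev])]
      congr 1
      rw [hSdef, Finset.mul_sum]
      exact Finset.sum_congr rfl fun i _ => (Finset.mul_sum _ _ _).symm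
    have hoff : 0 ≤ ∑ i : Fin N, ∑ j ∈ Finset.univ.filter (fun j => j ≠ i),
          ∑ l ∈ (Finset.univ.filter (fun l => l ≠ i)).erase j,
            ⟪(‖x i - x j‖)⁻¹ • (x i - x j),
              (a4 * (‖x i - x l‖ ^ (β1 + 1))⁻¹) • (x i - x l)⟫ := by
      apply triple_nonneg
      intro i j l hj hl hlj
      have hwneg : (a4 * (‖x l - x i‖ ^ (β1 + 1))⁻¹) • (x l - x i)
          = -((a4 * (‖x i - x l‖ ^ (β1 + 1))⁻¹) • (x i - x l)) := by
        rw [norm_sub_rev, show x l - x i = -(x i - x l) by abel, smul_neg]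
      rw [hwneg, inner_neg_right, ← sub_eq_add_neg, ← inner_sub_left,
        real_inner_smul_right]
      apply mul_nonneg (by positivity)
      rw [show x i - x l = (x i - x j) - (x l - x j) by abel]
      exact mono_aux (x i - x j) (x l - x j) (hz i j hj) (hz l j hlj.symm)
    rw [hsplit, ← hdiagsum]
    linarith
  -- the error term
  have hE : ∑ i : Fin N,
        ⟪∑ j ∈ Finset.univ.filter (fun j => j ≠ i), (‖x i - x j‖)⁻¹ • (x i - x j),
          ∑ l ∈ Finset.univ.filter (fun l => l ≠ i),
            (Gr (x i - x l) + (a4 * (‖x i - x l‖ ^ (β1 + 1))⁻¹) • (x i - x l))⟫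
      ≤ a4 * S + (N:ℝ) * ((N:ℝ) - 1) * (C' + ((N:ℝ) - 1) * a6) := by
    have per : ∀ i : Fin N,
        ⟪∑ j ∈ Finset.univ.filter (fun j => j ≠ i), (‖x i - x j‖)⁻¹ • (x i - x j),
          ∑ l ∈ Finset.univ.filter (fun l => l ≠ i),
            (Gr (x i - x l) + (a4 * (‖x i - x l‖ ^ (β1 + 1))⁻¹) • (x i - x l))⟫
        ≤ ((N:ℝ) - 1) * ∑ l ∈ Finset.univ.filter (fun l => l ≠ i),
            (a5 * (‖x i - x l‖ ^ β2)⁻¹ + a6) := by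
      intro i
      have hU : ‖∑ j ∈ Finset.univ.filter (fun j => j ≠ i), (‖x i - x j‖)⁻¹ • (x i - x j)‖
          ≤ (N:ℝ) - 1 := by
        calc ‖∑ j ∈ Finset.univ.filter (fun j => j ≠ i), (‖x i - x j‖)⁻¹ • (x i - x j)‖
            ≤ ∑ j ∈ Finset.univ.filter (fun j => j ≠ i), ‖(‖x i - x j‖)⁻¹ • (x i - x j)‖ :=
              norm_sum_le _ _
          _ = ∑ j ∈ Finset.univ.filter (fun j => j ≠ i), (1:ℝ) :=
              Finset.sum_congr rfl fun j hj => by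
                rw [norm_smul, norm_inv, norm_norm]
                exact inv_mul_cancel₀ (hr i j (Finset.mem_filter.mp hj).2).ne'
          _ = (N:ℝ) - 1 := by
              rw [Finset.sum_const, nsmul_eq_mul, mul_one, hcard i]
      have hE' : ‖∑ l ∈ Finset.univ.filter (fun l => l ≠ i),
            (Gr (x i - x l) + (a4 * (‖x i - x l‖ ^ (β1 + 1))⁻¹) • (x i - x l))‖
          ≤ ∑ l ∈ Finset.univ.filter (fun l => l ≠ i),
              (a5 * (‖x i - x l‖ ^ β2)⁻¹ + a6) := by
        calc ‖∑ l ∈ Finset.univ.filter (fun l => l ≠ i),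
              (Gr (x i - x l) + (a4 * (‖x i - x l‖ ^ (β1 + 1))⁻¹) • (x i - x l))‖
            ≤ ∑ l ∈ Finset.univ.filter (fun l => l ≠ i),
                ‖Gr (x i - x l) + (a4 * (‖x i - x l‖ ^ (β1 + 1))⁻¹) • (x i - x l)‖ :=
              norm_sum_le _ _
          _ ≤ ∑ l ∈ Finset.univ.filter (fun l => l ≠ i),
                (a5 * (‖x i - x l‖ ^ β2)⁻¹ + a6) :=
              Finset.sum_le_sum fun l hl => by
                have h := hbound (x i - x l) (hz i l (Finset.mem_filter.mp hl).2)
                rwa [div_eq_mul_inv] at h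
      have hEnonneg : (0:ℝ) ≤ ∑ l ∈ Finset.univ.filter (fun l => l ≠ i),
            (a5 * (‖x i - x l‖ ^ β2)⁻¹ + a6) := by
        refine Finset.sum_nonneg fun l hl => ?_
        have := Real.rpow_nonneg (norm_nonneg (x i - x l)) β2
        positivity
      calc ⟪∑ j ∈ Finset.univ.filter (fun j => j ≠ i), (‖x i - x j‖)⁻¹ • (x i - x j),
            ∑ l ∈ Finset.univ.filter (fun l => l ≠ i),
              (Gr (x i - x l) + (a4 * (‖x i - x l‖ ^ (β1 + 1))⁻¹) • (x i - x l))⟫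
          ≤ ‖∑ j ∈ Finset.univ.filter (fun j => j ≠ i), (‖x i - x j‖)⁻¹ • (x i - x j)‖
            * ‖∑ l ∈ Finset.univ.filter (fun l => l ≠ i),
                (Gr (x i - x l) + (a4 * (‖x i - x l‖ ^ (β1 + 1))⁻¹) • (x i - x l))‖ :=
            real_inner_le_norm _ _
        _ ≤ ((N:ℝ) - 1) * ∑ l ∈ Finset.univ.filter (fun l => l ≠ i),
              (a5 * (‖x i - x l‖ ^ β2)⁻¹ + a6) := by
            apply mul_le_mul hU hE' (norm_nonneg _) (by linarith)
    calc ∑ i : Fin N,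
          ⟪∑ j ∈ Finset.univ.filter (fun j => j ≠ i), (‖x i - x j‖)⁻¹ • (x i - x j),
            ∑ l ∈ Finset.univ.filter (fun l => l ≠ i),
              (Gr (x i - x l) + (a4 * (‖x i - x l‖ ^ (β1 + 1))⁻¹) • (x i - x l))⟫
        ≤ ∑ i : Fin N, ((N:ℝ) - 1) * ∑ l ∈ Finset.univ.filter (fun l => l ≠ i),
            (a5 * (‖x i - x l‖ ^ β2)⁻¹ + a6) := Finset.sum_le_sum fun i _ => per i
      _ ≤ ∑ i : Fin N, ∑ l ∈ Finset.univ.filter (fun l => l ≠ i),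
            ((a4/2) * (‖x i - x l‖ ^ β1)⁻¹ + (C' + ((N:ℝ) - 1) * a6)) := by
          refine Finset.sum_le_sum fun i _ => ?_
          rw [Finset.mul_sum]
          refine Finset.sum_le_sum fun l hl => ?_
          have hrl := hr i l (Finset.mem_filter.mp hl).2
          have h1 := habs _ hrl
          have h2 : a5 * ((N:ℝ) - 1) * (‖x i - x l‖ ^ β2)⁻¹
              ≤ A * (‖x i - x l‖ ^ β2)⁻¹ := by
            apply mul_le_mul_of_nonneg_right hA1
            have := Real.rpow_pos_of_pos hrl β2
            positivity
          have h3 : ((N:ℝ) - 1) * (a5 * (‖x i - x l‖ ^ β2)⁻¹ + a6)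
              = a5 * ((N:ℝ) - 1) * (‖x i - x l‖ ^ β2)⁻¹ + ((N:ℝ) - 1) * a6 := by ring
          linarith
      _ = (a4/2) * (∑ i : Fin N, ∑ l ∈ Finset.univ.filter (fun l => l ≠ i),
              (‖x i - x l‖ ^ β1)⁻¹)
            + (N:ℝ) * ((N:ℝ) - 1) * (C' + ((N:ℝ) - 1) * a6) := by
          have e : ∀ i : Fin N, ∑ l ∈ Finset.univ.filter (fun l => l ≠ i),
                ((a4/2) * (‖x i - x l‖ ^ β1)⁻¹ + (C' + ((N:ℝ) - 1) * a6))
              = (a4/2) * (∑ l ∈ Finset.univ.filter (fun l => l ≠ i),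
                  (‖x i - x l‖ ^ β1)⁻¹) + ((N:ℝ) - 1) * (C' + ((N:ℝ) - 1) * a6) := by
            intro i
            rw [Finset.sum_add_distrib, ← Finset.mul_sum, Finset.sum_const, nsmul_eq_mul, hcard i]
          rw [Finset.sum_congr rfl fun i _ => e i, Finset.sum_add_distrib, ← Finset.mul_sum,
            Finset.sum_const, Finset.card_univ, Fintype.card_fin, nsmul_eq_mul]
          push_cast
          ring
      _ ≤ a4 * S + (N:ℝ) * ((N:ℝ) - 1) * (C' + ((N:ℝ) - 1) * a6) := by
          rw [sum_pairs (fun i l => (‖x i - x l‖ ^ β1)⁻¹)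
            (fun i l => show (‖x i - x l‖ ^ β1)⁻¹ = (‖x l - x i‖ ^ β1)⁻¹ by
              rw [norm_sub_rev]), hSdef]
          apply le_of_eq
          ring
  calc ∑ i : Fin N,
        ⟪∑ j ∈ Finset.univ.filter (fun j => j ≠ i), (‖x i - x j‖)⁻¹ • (x i - x j),
          ∑ l ∈ Finset.univ.filter (fun l => l ≠ i), Gr (x i - x l)⟫
      = (∑ i : Fin N,
          ⟪∑ j ∈ Finset.univ.filter (fun j => j ≠ i), (‖x i - x j‖)⁻¹ • (x i - x j),
            ∑ l ∈ Finset.univ.filter (fun l => l ≠ i),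
              (Gr (x i - x l) + (a4 * (‖x i - x l‖ ^ (β1 + 1))⁻¹) • (x i - x l))⟫)
        - ∑ i : Fin N, ∑ j ∈ Finset.univ.filter (fun j => j ≠ i),
            ∑ l ∈ Finset.univ.filter (fun l => l ≠ i),
              ⟪(‖x i - x j‖)⁻¹ • (x i - x j),
                (a4 * (‖x i - x l‖ ^ (β1 + 1))⁻¹) • (x i - x l)⟫ := by
        rw [← Finset.sum_sub_distrib]
        exact Finset.sum_congr rfl fun i _ => hdecomp i
    _ ≤ (a4 * S + (N:ℝ) * ((N:ℝ) - 1) * (C' + ((N:ℝ) - 1) * a6)) - 2 * (a4 * S) := by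
        linarith
    _ = -a4 * S + (N:ℝ) * ((N:ℝ) - 1) * (C' + ((N:ℝ) - 1) * a6) := by ring

theorem stmt_6 (N d : ℕ) (hN : 2 ≤ N) (G : EuclideanSpace ℝ (Fin d) → ℝ)
    (hG : ContDiffOn ℝ 1 G {(0 : EuclideanSpace ℝ (Fin d))}ᶜ)
    (a4 a5 a6 β1 β2 : ℝ) (ha4 : 0 < a4) (ha5 : 0 ≤ a5) (ha6 : 0 ≤ a6)
    (hβ1 : 1 ≤ β1) (hβ2 : 0 ≤ β2) (hβ : β2 < β1)
    (hbound : ∀ x : EuclideanSpace ℝ (Fin d), x ≠ 0 →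
      ‖gradient G x + (a4 * (‖x‖ ^ (β1 + 1))⁻¹) • x‖ ≤ a5 / ‖x‖ ^ β2 + a6) :
    ∃ C : ℝ, 0 ≤ C ∧ ∀ x : Fin N → EuclideanSpace ℝ (Fin d),
      (∀ i j : Fin N, i ≠ j → x i ≠ x j) →
      ∑ i : Fin N,
        ⟪∑ j ∈ Finset.univ.filter (fun j => j ≠ i), (‖x i - x j‖)⁻¹ • (x i - x j),
          ∑ l ∈ Finset.univ.filter (fun l => l ≠ i), gradient G (x i - x l)⟫
        ≤ -a4 * (∑ i : Fin N, ∑ j ∈ Finset.univ.filter (fun j => i < j),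
            (‖x i - x j‖ ^ β1)⁻¹) + C := by
  have hN1 : (1:ℝ) ≤ (N:ℝ) - 1 := by
    have h2 : (2:ℝ) ≤ (N:ℝ) := by exact_mod_cast hN
    linarith
  set A : ℝ := a5 * ((N:ℝ) - 1) + 1 with hAdef
  have hA : 0 < A := by
    have := mul_nonneg ha5 (by linarith : (0:ℝ) ≤ (N:ℝ) - 1)
    rw [hAdef]; linarith
  set C' : ℝ := A * (((a4/(2*A)) ^ (β1 - β2)⁻¹) ^ β2)⁻¹ with hC'def
  have hC' : 0 ≤ C' := by
    have hq : (0:ℝ) < a4/(2*A) := by positivity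
    have hr0 : (0:ℝ) < (a4/(2*A)) ^ (β1 - β2)⁻¹ := Real.rpow_pos_of_pos hq _
    have := Real.rpow_pos_of_pos hr0 β2
    rw [hC'def]; positivity
  refine ⟨(N:ℝ) * ((N:ℝ) - 1) * (C' + ((N:ℝ) - 1) * a6), ?_, ?_⟩
  · have h1 : (0:ℝ) ≤ ((N:ℝ) - 1) * a6 := mul_nonneg (by linarith) ha6
    have h2 : (0:ℝ) ≤ (N:ℝ) * ((N:ℝ) - 1) := mul_nonneg (by positivity) (by linarith)
    exact mul_nonneg h2 (by linarith)
  · intro x hx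
    exact main_est hN (gradient G) a4 a5 a6 β1 β2 A C' ha4 ha5 ha6 hβ2 hβ
      (by rw [hAdef]; linarith) hA hC'
      (fun r hr => absorb a4 A β1 β2 ha4 hA hβ2 hβ r hr)
      hbound x hx
end

section
/- Let N ≥ 2, d ≥ 1, a_4 > 1/2, and let q_1,…,q_N ∈ ℝ be pairwise distinct real numbers (d = 1). Suppose G : ℝ \ {0} → ℝ is C¹ and satisfies |G'(x) + a_4 x/|x|²| ≤ a_5/|x|^{β_2} + a_6 with 0 ≤ β_2 < 1. Then for every ε’ > 0 there is a constant C such that −∑_{i=1}^N ∑_{j≠i} (q_i−q_j)/|q_i−q_j|² · (−∑_{ℓ≠i} G'(q_i−q_ℓ)) + ∑_{1≤i<j≤N} 1/|q_i−q_j|² ≤ −(2a_4 − 1 − ε’) ∑_{1≤i<j≤N} 1/|q_i−q_j|² + C. -/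
open Finset

lemma cyc_id (a b c : ℝ) (hab : a ≠ b) (hac : a ≠ c) (hbc : b ≠ c) :
    ((a - b) * (a - c))⁻¹ + ((b - c) * (b - a))⁻¹ + ((c - a) * (c - b))⁻¹ = 0 := by
  have h1 : a - b ≠ 0 := sub_ne_zero.2 hab
  have h2 : a - c ≠ 0 := sub_ne_zero.2 hac
  have h3 : b - c ≠ 0 := sub_ne_zero.2 hbc
  have h4 : b - a ≠ 0 := sub_ne_zero.2 hab.symm
  have h5 : c - a ≠ 0 := sub_ne_zero.2 hac.symm
  have h6 : c - b ≠ 0 := sub_ne_zero.2 hbc.symm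
  field_simp
  ring

lemma triple_zero {N : ℕ} (q : Fin N → ℝ) (hq : ∀ i j : Fin N, i ≠ j → q i ≠ q j) :
    ∑ i : Fin N, ∑ j : Fin N, ∑ l : Fin N,
      (if j ≠ i ∧ l ≠ i ∧ l ≠ j then (q i - q j)⁻¹ * (q i - q l)⁻¹ else 0) = 0 := by
  set D : Fin N × Fin N × Fin N → ℝ := fun p =>
    if p.2.1 ≠ p.1 ∧ p.2.2 ≠ p.1 ∧ p.2.2 ≠ p.2.1
    then (q p.1 - q p.2.1)⁻¹ * (q p.1 - q p.2.2)⁻¹ else 0 with hD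
  have hsum : ∑ i : Fin N, ∑ j : Fin N, ∑ l : Fin N,
      (if j ≠ i ∧ l ≠ i ∧ l ≠ j then (q i - q j)⁻¹ * (q i - q l)⁻¹ else 0)
      = ∑ p : Fin N × Fin N × Fin N, D p := by
    rw [Fintype.sum_prod_type]
    refine Finset.sum_congr rfl fun i _ => ?_
    rw [Fintype.sum_prod_type]
  rw [hsum]
  set e : (Fin N × Fin N × Fin N) ≃ (Fin N × Fin N × Fin N) :=
    ⟨fun p => (p.2.1, p.2.2, p.1), fun p => (p.2.2, p.1, p.2.1),
     fun p => rfl, fun p => rfl⟩ with he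
  have h1 : ∑ p, D (e p) = ∑ p, D p := Equiv.sum_comp e D
  have h2 : ∑ p, D (e (e p)) = ∑ p, D p := by
    rw [Equiv.sum_comp e (fun p => D (e p)), h1]
  have key : ∀ p : Fin N × Fin N × Fin N, D p + D (e p) + D (e (e p)) = 0 := by
    rintro ⟨i, j, l⟩
    by_cases hji : j = i
    · subst hji; simp [hD, he]
    by_cases hli : l = i
    · subst hli; simp [hD, he]
    by_cases hlj : l = j
    · subst hlj; simp [hD, he]
    · show D (i, j, l) + D (j, l, i) + D (l, i, j) = 0
      rw [hD]
      simp only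
      rw [if_pos ⟨hji, hli, hlj⟩, if_pos ⟨hlj, fun h => hji h.symm, fun h => hli h.symm⟩,
        if_pos ⟨fun h => hli h.symm, fun h => hlj h.symm, hji⟩]
      have := cyc_id (q i) (q j) (q l) (hq i j fun h => hji h.symm)
        (hq i l fun h => hli h.symm) (hq j l fun h => hlj h.symm)
      rw [← mul_inv, ← mul_inv, ← mul_inv]
      linarith
  have : 3 * ∑ p, D p = 0 := by
    have := Finset.sum_congr rfl (fun p (_ : p ∈ (univ : Finset (Fin N × Fin N × Fin N))) => key p)
    rw [Finset.sum_add_distrib, Finset.sum_add_distrib, h1, h2, Finset.sum_const_zero] at this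
    linarith
  linarith

lemma sq_sum {N : ℕ} (q : Fin N → ℝ) (hq : ∀ i j : Fin N, i ≠ j → q i ≠ q j) :
    ∑ i : Fin N, (∑ j ∈ Finset.univ.filter (fun j => j ≠ i), (q i - q j)⁻¹) ^ 2
      = ∑ i : Fin N, ∑ j ∈ Finset.univ.filter (fun j => j ≠ i), ((q i - q j) ^ 2)⁻¹ := by
  have step : ∀ i : Fin N,
      (∑ j ∈ Finset.univ.filter (fun j => j ≠ i), (q i - q j)⁻¹) ^ 2
      = (∑ j ∈ Finset.univ.filter (fun j => j ≠ i), ((q i - q j) ^ 2)⁻¹)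
        + ∑ j ∈ Finset.univ.filter (fun j => j ≠ i),
            ∑ l ∈ (Finset.univ.filter (fun l => l ≠ i)).erase j,
              (q i - q j)⁻¹ * (q i - q l)⁻¹ := by
    intro i
    rw [sq, Finset.sum_mul_sum, ← Finset.sum_add_distrib]
    refine Finset.sum_congr rfl fun j hj => ?_
    rw [← Finset.add_sum_erase _ (fun l => (q i - q j)⁻¹ * (q i - q l)⁻¹) hj,
      ← mul_inv, ← sq]
  rw [Finset.sum_congr rfl fun i _ => step i, Finset.sum_add_distrib]
  have R0 : ∑ i : Fin N, ∑ j ∈ Finset.univ.filter (fun j => j ≠ i),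
      ∑ l ∈ (Finset.univ.filter (fun l => l ≠ i)).erase j,
        (q i - q j)⁻¹ * (q i - q l)⁻¹ = 0 := by
    have := triple_zero q hq
    rw [← this]
    refine Finset.sum_congr rfl fun i _ => ?_
    rw [Finset.sum_filter]
    refine Finset.sum_congr rfl fun j _ => ?_
    have herase : (Finset.univ.filter (fun l => l ≠ i)).erase j
        = Finset.univ.filter (fun l : Fin N => l ≠ i ∧ l ≠ j) := by
      ext l
      simp [Finset.mem_erase, Finset.mem_filter, and_comm]
    by_cases hji : j ≠ i
    · rw [if_pos hji, herase, Finset.sum_filter]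
      refine Finset.sum_congr rfl fun l _ => ?_
      by_cases h : l ≠ i ∧ l ≠ j
      · rw [if_pos h, if_pos ⟨hji, h⟩]
      · rw [if_neg h, if_neg (fun hc => h ⟨hc.2.1, hc.2.2⟩)]
    · rw [if_neg hji]
      refine (Finset.sum_eq_zero fun l _ => ?_).symm
      rw [if_neg (fun hc => hji hc.1)]
  rw [R0, add_zero]

lemma pair_sym {N : ℕ} (F : Fin N → Fin N → ℝ) (hF : ∀ i j, F i j = F j i) :
    ∑ i : Fin N, ∑ j ∈ Finset.univ.filter (fun j => j ≠ i), F i j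
      = 2 * ∑ i : Fin N, ∑ j ∈ Finset.univ.filter (fun j => i < j), F i j := by
  have split : ∀ i : Fin N, ∑ j ∈ Finset.univ.filter (fun j => j ≠ i), F i j
      = (∑ j ∈ Finset.univ.filter (fun j => i < j), F i j)
        + ∑ j : Fin N, if j < i then F i j else 0 := by
    intro i
    rw [Finset.sum_filter, Finset.sum_filter, ← Finset.sum_add_distrib]
    refine Finset.sum_congr rfl fun j _ => ?_
    rcases lt_trichotomy i j with h | h | h
    · rw [if_pos h.ne', if_pos h, if_neg (asymm h), add_zero]
    · rw [if_neg (by simp [h]), if_neg (by simp [h]), if_neg (by simp [h]), add_zero]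
    · rw [if_pos h.ne, if_neg (asymm h), if_pos h, zero_add]
  rw [Finset.sum_congr rfl fun i _ => split i, Finset.sum_add_distrib]
  have swap : ∑ i : Fin N, ∑ j : Fin N, (if j < i then F i j else 0)
      = ∑ i : Fin N, ∑ j ∈ Finset.univ.filter (fun j => i < j), F i j := by
    rw [Finset.sum_comm]
    refine Finset.sum_congr rfl fun i _ => ?_
    rw [Finset.sum_filter]
    exact Finset.sum_congr rfl fun j _ => by rw [hF]
  rw [swap]; ring

lemma rpow_bound (β2 : ℝ) (hβ2 : 0 ≤ β2) (hβ2' : β2 < 1) (η : ℝ) (hη : 0 < η) :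
    ∃ K : ℝ, 0 ≤ K ∧ ∀ t : ℝ, 0 < t →
      ((t ^ β2 : ℝ)⁻¹) ^ 2 ≤ η * ((t ^ 2 : ℝ))⁻¹ + K := by
  set p : ℝ := 2 - 2 * β2 with hp
  have hp0 : 0 < p := by simp [hp]; linarith
  set r : ℝ := η ^ p⁻¹ with hr
  have hr0 : 0 < r := Real.rpow_pos_of_pos hη _
  have hrp : r ^ p = η := Real.rpow_inv_rpow hη.le hp0.ne'
  refine ⟨((r ^ (2 * β2) : ℝ))⁻¹, inv_nonneg.2 (Real.rpow_pos_of_pos hr0 _).le, fun t ht => ?_⟩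
  have key : ((t ^ β2 : ℝ)⁻¹) ^ 2 = (t ^ (2 * β2) : ℝ)⁻¹ := by
    rw [inv_pow, ← Real.rpow_natCast (t ^ β2) 2, ← Real.rpow_mul ht.le]
    norm_num [mul_comm]
  rw [key]
  have ht2 : (t : ℝ) ^ 2 = t ^ (2 : ℝ) := by
    rw [← Real.rpow_natCast t 2]; norm_num
  have ha : (0 : ℝ) < t ^ (2 * β2) := Real.rpow_pos_of_pos ht _
  rcases le_total t r with htr | htr
  · -- small t
    have hsplit : t ^ (2 : ℝ) = t ^ (2 * β2) * t ^ p := by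
      rw [← Real.rpow_add ht]; norm_num [hp]
    have hle : t ^ p ≤ η := by
      calc t ^ p ≤ r ^ p := Real.rpow_le_rpow ht.le htr hp0.le
        _ = η := hrp
    have hb : t ^ (2 : ℝ) ≤ t ^ (2 * β2) * η := by
      rw [hsplit]; exact mul_le_mul_of_nonneg_left hle ha.le
    have h2 : (t ^ (2 * β2))⁻¹ * (t ^ (2:ℝ)) ≤ η := by
      rw [inv_mul_le_iff₀ ha]; linarith
    have hb2 : (0:ℝ) < t ^ (2:ℝ) := Real.rpow_pos_of_pos ht _
    have : (t ^ (2 * β2))⁻¹ ≤ η * (t ^ (2:ℝ))⁻¹ := by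
      have := mul_le_mul_of_nonneg_right h2 (inv_nonneg.2 hb2.le)
      rwa [mul_assoc, mul_inv_cancel₀ hb2.ne', mul_one] at this
    rw [ht2]
    have hK : (0:ℝ) ≤ (r ^ (2*β2))⁻¹ := inv_nonneg.2 (Real.rpow_pos_of_pos hr0 _).le
    linarith
  · -- large t
    have : (t ^ (2 * β2))⁻¹ ≤ (r ^ (2 * β2))⁻¹ := by
      apply inv_anti₀ (Real.rpow_pos_of_pos hr0 _)
      exact Real.rpow_le_rpow hr0.le htr (by positivity)
    have hη2 : (0:ℝ) ≤ η * ((t^2 : ℝ))⁻¹ := by positivity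
    linarith
open Finset

lemma young_ineq (δ a b : ℝ) (hδ : 0 < δ) : a * b ≤ δ * a ^ 2 + (4 * δ)⁻¹ * b ^ 2 := by
  have h4 : (0:ℝ) < 4 * δ := by linarith
  rw [← sub_nonneg]
  have expand : δ * a ^ 2 + (4 * δ)⁻¹ * b ^ 2 - a * b = (4 * δ)⁻¹ * (2 * δ * a - b) ^ 2 := by
    field_simp
    ring
  rw [expand]
  positivity

set_option maxHeartbeats 2000000 in
theorem stmt_15 (N : ℕ) (hN : 2 ≤ N)
    (a4 a5 a6 β2 : ℝ) (ha4 : 1 / 2 < a4) (ha5 : 0 ≤ a5) (ha6 : 0 ≤ a6)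
    (hβ2 : 0 ≤ β2) (hβ2' : β2 < 1)
    (G : ℝ → ℝ) (hG : ContDiffOn ℝ 1 G {(0 : ℝ)}ᶜ)
    (hbound : ∀ x : ℝ, x ≠ 0 →
      |deriv G x + a4 * x / |x| ^ 2| ≤ a5 / |x| ^ β2 + a6) :
    ∀ ε' : ℝ, 0 < ε' → ∃ C : ℝ,
      ∀ q : Fin N → ℝ, (∀ i j : Fin N, i ≠ j → q i ≠ q j) →
      -(∑ i : Fin N,
          (∑ j ∈ Finset.univ.filter (fun j => j ≠ i), (q i - q j) / |q i - q j| ^ 2) *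
            (-(∑ l ∈ Finset.univ.filter (fun l => l ≠ i), deriv G (q i - q l))))
        + ∑ i : Fin N, ∑ j ∈ Finset.univ.filter (fun j => i < j), (|q i - q j| ^ 2)⁻¹
      ≤ -(2 * a4 - 1 - ε') *
          (∑ i : Fin N, ∑ j ∈ Finset.univ.filter (fun j => i < j), (|q i - q j| ^ 2)⁻¹)
        + C := by
  intro ε' hε'
  have hN0 : (0:ℝ) < N := by
    have : 0 < N := by omega
    exact_mod_cast this
  set δ : ℝ := ε' / (4 * N) with hδdef
  have hδ : 0 < δ := by positivity
  set η : ℝ := δ * ε' / (2 * a5 ^ 2 + 2) with hηdef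
  have hη : 0 < η := by positivity
  obtain ⟨K, hK0, hK⟩ := rpow_bound β2 hβ2 hβ2' η hη
  set c2 : ℝ := (4 * δ)⁻¹ * (2 * a5 ^ 2 * η) with hc2def
  set c3 : ℝ := (4 * δ)⁻¹ * (2 * a5 ^ 2 * K + 2 * a6 ^ 2) with hc3def
  have hc2 : 0 ≤ c2 := by positivity
  have hc3 : 0 ≤ c3 := by positivity
  have hNδ : (N:ℝ) * δ = ε' / 4 := by
    rw [hδdef]; field_simp
  have hc2le : c2 ≤ ε' / 4 := by
    have heq : c2 = a5 ^ 2 * ε' / (4 * a5 ^ 2 + 4) := by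
      rw [hc2def, hηdef]
      field_simp
    rw [heq, div_le_div_iff₀ (by positivity) (by norm_num : (0:ℝ) < 4)]
    nlinarith [sq_nonneg a5, hε'.le]
  have hcoef : (N:ℝ) * δ + c2 ≤ ε' / 2 := by
    rw [hNδ]; linarith
  clear_value δ η c2 c3
  refine ⟨(N:ℝ) ^ 2 * c3, fun q hq => ?_⟩
  simp only [sq_abs]
  -- abbreviations
  have key : ∀ i ∈ (univ : Finset (Fin N)),
      (∑ j ∈ Finset.univ.filter (fun j => j ≠ i), (q i - q j) / (q i - q j) ^ 2) *
        (-(∑ l ∈ Finset.univ.filter (fun l => l ≠ i), deriv G (q i - q l)))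
      = a4 * (∑ j ∈ Finset.univ.filter (fun j => j ≠ i), (q i - q j)⁻¹) ^ 2
        - (∑ j ∈ Finset.univ.filter (fun j => j ≠ i), (q i - q j)⁻¹)
          * (∑ l ∈ Finset.univ.filter (fun l => l ≠ i),
              (deriv G (q i - q l) + a4 * (q i - q l)⁻¹)) := by
    intro i _
    have hA : (∑ j ∈ Finset.univ.filter (fun j => j ≠ i), (q i - q j) / (q i - q j) ^ 2)
        = ∑ j ∈ Finset.univ.filter (fun j => j ≠ i), (q i - q j)⁻¹ := by
      refine Finset.sum_congr rfl fun j hj => ?_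
      have hj' : j ≠ i := (Finset.mem_filter.1 hj).2
      have hx : q i - q j ≠ 0 := sub_ne_zero.2 (hq i j hj'.symm)
      rw [sq, div_mul_cancel_left₀ hx]
    have hB : (∑ l ∈ Finset.univ.filter (fun l => l ≠ i),
          (deriv G (q i - q l) + a4 * (q i - q l)⁻¹))
        = (∑ l ∈ Finset.univ.filter (fun l => l ≠ i), deriv G (q i - q l))
          + a4 * ∑ l ∈ Finset.univ.filter (fun l => l ≠ i), (q i - q l)⁻¹ := by
      rw [Finset.sum_add_distrib, Finset.mul_sum]
    rw [hA, hB]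
    ring
  rw [Finset.sum_congr rfl key, Finset.sum_sub_distrib, ← Finset.mul_sum, sq_sum q hq]
  have h2S : (∑ i : Fin N, ∑ j ∈ Finset.univ.filter (fun j => j ≠ i), ((q i - q j) ^ 2)⁻¹)
      = 2 * ∑ i : Fin N, ∑ j ∈ Finset.univ.filter (fun j => i < j), ((q i - q j) ^ 2)⁻¹ := by
    exact pair_sym (fun i j => ((q i - q j) ^ 2)⁻¹) (fun i j => by show ((q i - q j) ^ 2)⁻¹ = ((q j - q i) ^ 2)⁻¹; rw [← neg_sub, neg_sq])
  have hS0 : 0 ≤ ∑ i : Fin N, ∑ j ∈ Finset.univ.filter (fun j => i < j), ((q i - q j) ^ 2)⁻¹ :=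
    Finset.sum_nonneg fun i _ => Finset.sum_nonneg fun j _ => by positivity
  have hS'0 : 0 ≤ ∑ i : Fin N, ∑ j ∈ Finset.univ.filter (fun j => j ≠ i), ((q i - q j) ^ 2)⁻¹ :=
    Finset.sum_nonneg fun i _ => Finset.sum_nonneg fun j _ => by positivity
  -- per-term bound
  have per : ∀ i l : Fin N, l ≠ i →
      (∑ j ∈ Finset.univ.filter (fun j => j ≠ i), (q i - q j)⁻¹)
        * (deriv G (q i - q l) + a4 * (q i - q l)⁻¹)
      ≤ δ * (∑ j ∈ Finset.univ.filter (fun j => j ≠ i), (q i - q j)⁻¹) ^ 2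
        + c2 * ((q i - q l) ^ 2)⁻¹ + c3 := by
    intro i l hl
    set F : ℝ := ∑ j ∈ Finset.univ.filter (fun j => j ≠ i), (q i - q j)⁻¹ with hF
    set x : ℝ := q i - q l with hx
    have hx0 : x ≠ 0 := sub_ne_zero.2 (hq i l hl.symm)
    have htpos : 0 < |x| := abs_pos.2 hx0
    have hb := hbound x hx0
    have hax : a4 * x / |x| ^ 2 = a4 * x⁻¹ := by
      rw [sq_abs, sq, mul_div_assoc, div_mul_cancel_left₀ hx0]
    rw [hax, div_eq_mul_inv] at hb
    set ee : ℝ := deriv G x + a4 * x⁻¹ with hee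
    set B : ℝ := (|x| ^ β2)⁻¹ with hB
    clear_value F x ee B
    have hsq : ee ^ 2 ≤ (a5 * B + a6) ^ 2 := by
      rw [← sq_abs ee]
      exact pow_le_pow_left₀ (abs_nonneg _) hb 2
    have hBB : B ^ 2 ≤ η * (x ^ 2)⁻¹ + K := by
      have h := hK |x| htpos
      rw [sq_abs] at h
      rw [hB]
      exact h
    have e2 : ee ^ 2 ≤ 2 * a5 ^ 2 * (η * (x ^ 2)⁻¹ + K) + 2 * a6 ^ 2 := by
      have h1 : (a5 * B + a6) ^ 2 ≤ 2 * a5 ^ 2 * B ^ 2 + 2 * a6 ^ 2 := by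
        nlinarith [sq_nonneg (a5 * B - a6)]
      have h2 : 2 * a5 ^ 2 * B ^ 2 ≤ 2 * a5 ^ 2 * (η * (x ^ 2)⁻¹ + K) :=
        mul_le_mul_of_nonneg_left hBB (by positivity)
      linarith
    have hy := young_ineq δ F ee hδ
    have h3 : (4 * δ)⁻¹ * ee ^ 2 ≤ c2 * (x ^ 2)⁻¹ + c3 := by
      calc (4 * δ)⁻¹ * ee ^ 2
          ≤ (4 * δ)⁻¹ * (2 * a5 ^ 2 * (η * (x ^ 2)⁻¹ + K) + 2 * a6 ^ 2) :=
            mul_le_mul_of_nonneg_left e2 (by positivity)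
        _ = c2 * (x ^ 2)⁻¹ + c3 := by rw [hc2def, hc3def]; ring
    linarith
  -- cross-term bound
  have hcross : (∑ i : Fin N, (∑ j ∈ Finset.univ.filter (fun j => j ≠ i), (q i - q j)⁻¹)
        * (∑ l ∈ Finset.univ.filter (fun l => l ≠ i),
            (deriv G (q i - q l) + a4 * (q i - q l)⁻¹)))
      ≤ ε' / 2 * (∑ i : Fin N, ∑ j ∈ Finset.univ.filter (fun j => j ≠ i), ((q i - q j) ^ 2)⁻¹)
        + (N:ℝ) ^ 2 * c3 := by
    have step1 : (∑ i : Fin N, (∑ j ∈ Finset.univ.filter (fun j => j ≠ i), (q i - q j)⁻¹)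
          * (∑ l ∈ Finset.univ.filter (fun l => l ≠ i),
              (deriv G (q i - q l) + a4 * (q i - q l)⁻¹)))
        ≤ ∑ i : Fin N,
            ((N:ℝ) * δ * (∑ j ∈ Finset.univ.filter (fun j => j ≠ i), (q i - q j)⁻¹) ^ 2
              + c2 * (∑ l ∈ Finset.univ.filter (fun l => l ≠ i), ((q i - q l) ^ 2)⁻¹)
              + (N:ℝ) * c3) := by
      refine Finset.sum_le_sum fun i _ => ?_
      rw [Finset.mul_sum]
      calc (∑ l ∈ Finset.univ.filter (fun l => l ≠ i),
              (∑ j ∈ Finset.univ.filter (fun j => j ≠ i), (q i - q j)⁻¹)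
                * (deriv G (q i - q l) + a4 * (q i - q l)⁻¹))
          ≤ ∑ l ∈ Finset.univ.filter (fun l => l ≠ i),
              (δ * (∑ j ∈ Finset.univ.filter (fun j => j ≠ i), (q i - q j)⁻¹) ^ 2
                + c2 * ((q i - q l) ^ 2)⁻¹ + c3) :=
            Finset.sum_le_sum fun l hl => per i l (Finset.mem_filter.1 hl).2
        _ = ((Finset.univ.filter (fun l => l ≠ i)).card : ℝ)
              * (δ * (∑ j ∈ Finset.univ.filter (fun j => j ≠ i), (q i - q j)⁻¹) ^ 2 + c3)
              + c2 * (∑ l ∈ Finset.univ.filter (fun l => l ≠ i), ((q i - q l) ^ 2)⁻¹) := by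
            rw [Finset.sum_add_distrib, Finset.sum_add_distrib, Finset.sum_const,
              Finset.sum_const, ← Finset.mul_sum, nsmul_eq_mul, nsmul_eq_mul]
            ring
        _ ≤ (N:ℝ) * (δ * (∑ j ∈ Finset.univ.filter (fun j => j ≠ i), (q i - q j)⁻¹) ^ 2 + c3)
              + c2 * (∑ l ∈ Finset.univ.filter (fun l => l ≠ i), ((q i - q l) ^ 2)⁻¹) := by
            have hcard : ((Finset.univ.filter (fun l => l ≠ i)).card : ℝ) ≤ (N:ℝ) := by
              have := Finset.card_filter_le (univ : Finset (Fin N)) (fun l => l ≠ i)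
              have h2 : (univ : Finset (Fin N)).card = N := by simp
              exact_mod_cast h2 ▸ this
            have hpos : 0 ≤ δ * (∑ j ∈ Finset.univ.filter (fun j => j ≠ i), (q i - q j)⁻¹) ^ 2 + c3 := by
              positivity
            have := mul_le_mul_of_nonneg_right hcard hpos
            linarith
        _ = (N:ℝ) * δ * (∑ j ∈ Finset.univ.filter (fun j => j ≠ i), (q i - q j)⁻¹) ^ 2
              + c2 * (∑ l ∈ Finset.univ.filter (fun l => l ≠ i), ((q i - q l) ^ 2)⁻¹)
              + (N:ℝ) * c3 := by ring
    have step2 : ∑ i : Fin N,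
          ((N:ℝ) * δ * (∑ j ∈ Finset.univ.filter (fun j => j ≠ i), (q i - q j)⁻¹) ^ 2
            + c2 * (∑ l ∈ Finset.univ.filter (fun l => l ≠ i), ((q i - q l) ^ 2)⁻¹)
            + (N:ℝ) * c3)
        = ((N:ℝ) * δ + c2) * (∑ i : Fin N, ∑ j ∈ Finset.univ.filter (fun j => j ≠ i), ((q i - q j) ^ 2)⁻¹)
          + (N:ℝ) ^ 2 * c3 := by
      rw [Finset.sum_add_distrib, Finset.sum_add_distrib, ← Finset.mul_sum, ← Finset.mul_sum,
        Finset.sum_const, Finset.card_univ, Fintype.card_fin, nsmul_eq_mul, sq_sum q hq]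
      ring
    have step3 : ((N:ℝ) * δ + c2) * (∑ i : Fin N, ∑ j ∈ Finset.univ.filter (fun j => j ≠ i), ((q i - q j) ^ 2)⁻¹)
        ≤ ε' / 2 * (∑ i : Fin N, ∑ j ∈ Finset.univ.filter (fun j => j ≠ i), ((q i - q j) ^ 2)⁻¹) :=
      mul_le_mul_of_nonneg_right hcoef hS'0
    linarith
  rw [h2S] at hcross ⊢
  nlinarith [hcross, hS0]
end
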